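/- arXiv:2208.04652 — 4 statements merged into one kernel-verified Lean document; each statement's English description precedes it below -/
import Mathlib

section
/- Let A and B be ℤ₂-graded CIF vector subspaces of V, with graded components A₀, A₁ and B₀, B₁ respectively. Then [A, B] is a ℤ₂-graded CIF vector subspace of V; more precisely, [A, B] = ([A₀, B₀] + [A₁, B₁]) + ([A₀, B₁] + [A₁, B₀]), where [A₀, B₀] + [A₁, B₁] is a CIF vector subspace supported in V₀ (its membership degree vanishes and its non-membership degree equals 1 outside V₀) and [A₀, B₁] + [A₁, B₀] is a CIF vector subspace supported in V₁. -/
namespace CIF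

/-- A complex intuitionistic fuzzy (CIF) set on `V`, recorded by the four real-valued
degree functions `r, ω, r̂, ω̂` (so that the membership degree is `λ = r·e^{i2πω}` and
the non-membership degree is `ρ = r̂·e^{i2πω̂}`).  The order on such complex values is
componentwise, so all notions below are phrased componentwise in the four functions. -/
structure CIFSet (V : Type*) where
  r : V → ℝ
  w : V → ℝ
  rhat : V → ℝ
  what : V → ℝ

namespace CIFSet

/-- `A` is a genuine CIF set: all degree functions take values in `[0,1]` and
`r_A(x) + r̂_A(x) ≤ 1` for all `x`. -/
def IsCIF {V : Type*} (A : CIFSet V) : Prop :=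
  ∀ x, A.r x ∈ Set.Icc (0 : ℝ) 1 ∧ A.w x ∈ Set.Icc (0 : ℝ) 1 ∧
    A.rhat x ∈ Set.Icc (0 : ℝ) 1 ∧ A.what x ∈ Set.Icc (0 : ℝ) 1 ∧
    A.r x + A.rhat x ≤ 1

/-- `A ⊆ B` : `λ_A(x) ≤ λ_B(x)` and `ρ_A(x) ≥ ρ_B(x)` for all `x`
(componentwise in `r, ω`, resp. `r̂, ω̂`). -/
def Subset {V : Type*} (A B : CIFSet V) : Prop :=
  ∀ x, A.r x ≤ B.r x ∧ A.w x ≤ B.w x ∧ B.rhat x ≤ A.rhat x ∧ B.what x ≤ A.what x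

/-- `A` is homogeneous with `B`. -/
def Homog {V : Type*} (A B : CIFSet V) : Prop :=
  (∀ x y, A.r x ≤ B.r y ↔ A.w x ≤ B.w y) ∧
  (∀ x y, A.rhat x ≤ B.rhat y ↔ A.what x ≤ B.what y)

end CIFSet

/-- Supremum of `min (f a) (g b)` over all decompositions `x = a + b`
(the `insert 0` is harmless since all values are `≥ 0`, and makes the value `0`
when no decomposition exists). -/
noncomputable def supDecomp {V : Type*} [Add V] (f g : V → ℝ) (x : V) : ℝ :=
  sSup (insert 0 {t | ∃ a b : V, x = a + b ∧ t = min (f a) (g b)})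

/-- Infimum of `max (f a) (g b)` over all decompositions `x = a + b`
(the `insert 1` is harmless since all values are `≤ 1`, and makes the value `1`
when no decomposition exists). -/
noncomputable def infDecomp {V : Type*} [Add V] (f g : V → ℝ) (x : V) : ℝ :=
  sInf (insert 1 {t | ∃ a b : V, x = a + b ∧ t = max (f a) (g b)})

/-- The complex intuitionistic sum `A + B` of two CIF sets. -/
noncomputable def CIFSet.sum {V : Type*} [Add V] (A B : CIFSet V) : CIFSet V where
  r := supDecomp A.r B.r
  w := supDecomp A.w B.w
  rhat := infDecomp A.rhat B.rhat
  what := infDecomp A.what B.what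

/-- `A` is a CIF vector subspace of `V` (with the normalizations
`λ_A(0) = 1·e^{i2π·1}` and `ρ_A(0) = 0·e^{i2π·0}`). -/
structure CIFSet.IsSubspace (K : Type*) [Field K] {V : Type*} [AddCommGroup V]
    [Module K V] (A : CIFSet V) : Prop where
  isCIF : A.IsCIF
  add_r : ∀ x y, min (A.r x) (A.r y) ≤ A.r (x + y)
  add_w : ∀ x y, min (A.w x) (A.w y) ≤ A.w (x + y)
  add_rhat : ∀ x y, A.rhat (x + y) ≤ max (A.rhat x) (A.rhat y)
  add_what : ∀ x y, A.what (x + y) ≤ max (A.what x) (A.what y)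
  smul_r : ∀ (c : K) (x : V), A.r x ≤ A.r (c • x)
  smul_w : ∀ (c : K) (x : V), A.w x ≤ A.w (c • x)
  smul_rhat : ∀ (c : K) (x : V), A.rhat (c • x) ≤ A.rhat x
  smul_what : ∀ (c : K) (x : V), A.what (c • x) ≤ A.what x
  r_zero : A.r 0 = 1
  w_zero : A.w 0 = 1
  rhat_zero : A.rhat 0 = 0
  what_zero : A.what 0 = 0

open Classical in
/-- The scalar multiple `c • A` of a CIF set: for `c ≠ 0` it is `x ↦ A(c⁻¹ x)`;
for `c = 0` it is `1 = 1·e^{i2π·1}` (resp. `ρ = 0`) at `0`, and `λ = 0`, `ρ = 1·e^{i2π·1}`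
elsewhere. -/
noncomputable def CIFSet.smulCIF {K : Type*} [Field K] {V : Type*} [AddCommGroup V]
    [Module K V] (c : K) (A : CIFSet V) : CIFSet V where
  r x := if c = 0 then (if x = 0 then 1 else 0) else A.r (c⁻¹ • x)
  w x := if c = 0 then (if x = 0 then 1 else 0) else A.w (c⁻¹ • x)
  rhat x := if c = 0 then (if x = 0 then 0 else 1) else A.rhat (c⁻¹ • x)
  what x := if c = 0 then (if x = 0 then 0 else 1) else A.what (c⁻¹ • x)

/-- The set of values `minᵢ (min (f xᵢ) (g yᵢ))` over all finite representations
`x = Σᵢ cᵢ • ⁅xᵢ, yᵢ⁆` with `cᵢ ∈ K`, `xᵢ, yᵢ ∈ V` (nonempty index family). -/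
def bracketRepMin (K : Type*) [Field K] {V : Type*} [AddCommGroup V] [Module K V]
    (br : V → V → V) (f g : V → ℝ) (x : V) : Set ℝ :=
  {t | ∃ (n : ℕ) (c : Fin (n + 1) → K) (a b : Fin (n + 1) → V),
    x = ∑ i, c i • br (a i) (b i) ∧
    t = Finset.univ.inf' Finset.univ_nonempty fun i => min (f (a i)) (g (b i))}

/-- The set of values `maxᵢ (max (f xᵢ) (g yᵢ))` over all finite representations
`x = Σᵢ cᵢ • ⁅xᵢ, yᵢ⁆`. -/
def bracketRepMax (K : Type*) [Field K] {V : Type*} [AddCommGroup V] [Module K V]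
    (br : V → V → V) (f g : V → ℝ) (x : V) : Set ℝ :=
  {t | ∃ (n : ℕ) (c : Fin (n + 1) → K) (a b : Fin (n + 1) → V),
    x = ∑ i, c i • br (a i) (b i) ∧
    t = Finset.univ.sup' Finset.univ_nonempty fun i => max (f (a i)) (g (b i))}

/-- The complex intuitionistic fuzzy bracket product `[A, B]` of two CIF sets, with
respect to the bracket `br` on `V`:  `r` and `ω` are the sup over all finite
representations `x = Σᵢ cᵢ [xᵢ, yᵢ]` of `minᵢ min(·(xᵢ), ·(yᵢ))` (and `0` when no
representation exists), `r̂` and `ω̂` are the inf of `maxᵢ max(·(xᵢ), ·(yᵢ))`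
(and `1` when no representation exists). -/
noncomputable def CIFSet.bracket (K : Type*) [Field K] {V : Type*} [AddCommGroup V]
    [Module K V] (br : V → V → V) (A B : CIFSet V) : CIFSet V where
  r x := sSup (insert 0 (bracketRepMin K br A.r B.r x))
  w x := sSup (insert 0 (bracketRepMin K br A.w B.w x))
  rhat x := sInf (insert 1 (bracketRepMax K br A.rhat B.rhat x))
  what x := sInf (insert 1 (bracketRepMax K br A.what B.what x))

/-- `V`, with the grading given by the complementary submodules `V0, V1` and the
bracket `br`, is a Lie superalgebra over `K`: the bracket is bilinear, respects the
grading, and satisfies super skew-symmetry and the super Jacobi identity on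
homogeneous elements (grades are recorded as `Bool`, `false ↦ V0`, `true ↦ V1`). -/
structure IsLieSuper (K : Type*) [Field K] {V : Type*} [AddCommGroup V] [Module K V]
    (V0 V1 : Submodule K V) (br : V → V → V) : Prop where
  compl : IsCompl V0 V1
  add_left : ∀ x y z : V, br (x + y) z = br x z + br y z
  add_right : ∀ x y z : V, br x (y + z) = br x y + br x z
  smul_left : ∀ (c : K) (x y : V), br (c • x) y = c • br x y
  smul_right : ∀ (c : K) (x y : V), br x (c • y) = c • br x y
  grade : ∀ (g h : Bool), ∀ x ∈ (bif g then V1 else V0), ∀ y ∈ (bif h then V1 else V0),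
    br x y ∈ (bif xor g h then V1 else V0)
  skew : ∀ (g h : Bool), ∀ x ∈ (bif g then V1 else V0), ∀ y ∈ (bif h then V1 else V0),
    br x y = -(((-1 : K) ^ ((bif g then 1 else 0) * (bif h then 1 else 0) : ℕ)) • br y x)
  jacobi : ∀ (g h k : Bool), ∀ x ∈ (bif g then V1 else V0), ∀ y ∈ (bif h then V1 else V0),
    ∀ z ∈ (bif k then V1 else V0),
    ((-1 : K) ^ ((bif g then 1 else 0) * (bif k then 1 else 0) : ℕ)) • br x (br y z) +
    ((-1 : K) ^ ((bif g then 1 else 0) * (bif h then 1 else 0) : ℕ)) • br y (br z x) +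
    ((-1 : K) ^ ((bif h then 1 else 0) * (bif k then 1 else 0) : ℕ)) • br z (br x y) = 0

/-- `A` is a ℤ₂-graded CIF vector subspace of `V` with graded components `A0, A1`:
`A0, A1` are CIF vector subspaces supported in `V0` resp. `V1` (membership degree `0`
and non-membership degree `1` outside), and `A = A0 + A1`. -/
structure IsGradedSubspace (K : Type*) [Field K] {V : Type*} [AddCommGroup V]
    [Module K V] (V0 V1 : Submodule K V) (A A0 A1 : CIFSet V) : Prop where
  subA : CIFSet.IsSubspace K A
  sub0 : CIFSet.IsSubspace K A0
  sub1 : CIFSet.IsSubspace K A1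
  supp0 : ∀ x, x ∉ V0 → A0.r x = 0 ∧ A0.w x = 0 ∧ A0.rhat x = 1 ∧ A0.what x = 1
  supp1 : ∀ x, x ∉ V1 → A1.r x = 0 ∧ A1.w x = 0 ∧ A1.rhat x = 1 ∧ A1.what x = 1
  eq : A = A0.sum A1

/-- `A` is a ℤ₂-graded CIF vector subspace of `V`. -/
def IsGraded (K : Type*) [Field K] {V : Type*} [AddCommGroup V] [Module K V]
    (V0 V1 : Submodule K V) (A : CIFSet V) : Prop :=
  ∃ A0 A1 : CIFSet V, IsGradedSubspace K V0 V1 A A0 A1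

/-- `A` is a CIF ideal of the Lie superalgebra `V`: a ℤ₂-graded CIF vector subspace
with `λ_A([x,y]) ≥ λ_A(x) ∨ λ_A(y)` and `ρ_A([x,y]) ≤ ρ_A(x) ∧ ρ_A(y)`. -/
structure IsIdeal (K : Type*) [Field K] {V : Type*} [AddCommGroup V] [Module K V]
    (V0 V1 : Submodule K V) (br : V → V → V) (A : CIFSet V) : Prop where
  graded : IsGraded K V0 V1 A
  br_r : ∀ x y, max (A.r x) (A.r y) ≤ A.r (br x y)
  br_w : ∀ x y, max (A.w x) (A.w y) ≤ A.w (br x y)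
  br_rhat : ∀ x y, A.rhat (br x y) ≤ min (A.rhat x) (A.rhat y)
  br_what : ∀ x y, A.what (br x y) ≤ min (A.what x) (A.what y)

/-- `f : V → V'` is an anti-homomorphism of Lie superalgebras: a `K`-linear map
preserving the grading with `f [x, y] = -[f x, f y]`. -/
structure IsAntiHom (K : Type*) [Field K] {V V' : Type*} [AddCommGroup V] [Module K V]
    [AddCommGroup V'] [Module K V'] (V0 V1 : Submodule K V) (W0 W1 : Submodule K V')
    (br : V → V → V) (br' : V' → V' → V') (f : V → V') : Prop where
  map_add : ∀ x y, f (x + y) = f x + f y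
  map_smul : ∀ (c : K) (x : V), f (c • x) = c • f x
  map_gr0 : ∀ x ∈ V0, f x ∈ W0
  map_gr1 : ∀ x ∈ V1, f x ∈ W1
  map_br : ∀ x y, f (br x y) = -br' (f x) (f y)

open Classical in
/-- The image `f(A)` of a CIF set under `f`: `λ_{f(A)}(y) = sup_{f x = y} λ_A(x)`
(componentwise) for `y` in the range of `f`, and `0` otherwise; `ρ_{f(A)}(y)` is the
corresponding inf, and `1` outside the range. -/
noncomputable def CIFSet.image {V V' : Type*} (f : V → V') (A : CIFSet V) :
    CIFSet V' where
  r y := if y ∈ Set.range f then sSup {t | ∃ x, f x = y ∧ t = A.r x} else 0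
  w y := if y ∈ Set.range f then sSup {t | ∃ x, f x = y ∧ t = A.w x} else 0
  rhat y := if y ∈ Set.range f then sInf {t | ∃ x, f x = y ∧ t = A.rhat x} else 1
  what y := if y ∈ Set.range f then sInf {t | ∃ x, f x = y ∧ t = A.what x} else 1

/-- The preimage `f⁻¹(B)` of a CIF set under `f`: `λ_{f⁻¹(B)}(x) = λ_B(f x)` and
`ρ_{f⁻¹(B)}(x) = ρ_B(f x)`. -/
def CIFSet.preimage {V V' : Type*} (f : V → V') (B : CIFSet V') : CIFSet V where
  r x := B.r (f x)
  w x := B.w (f x)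
  rhat x := B.rhat (f x)
  what x := B.what (f x)


section Aux

open Set

theorem CIFSet.ext' {W : Type*} {A B : CIFSet W} (h1 : A.r = B.r) (h2 : A.w = B.w)
    (h3 : A.rhat = B.rhat) (h4 : A.what = B.what) : A = B := by
  cases A; cases B; simp_all

theorem min_sSup_le' {T₁ T₂ T₃ : Set ℝ} (h₁ : T₁.Nonempty) (h₂ : T₂.Nonempty)
    (h : ∀ t₁ ∈ T₁, ∀ t₂ ∈ T₂, min t₁ t₂ ≤ sSup T₃) :
    min (sSup T₁) (sSup T₂) ≤ sSup T₃ := by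
  refine le_of_forall_pos_le_add fun ε hε => ?_
  obtain ⟨t₁, ht₁, hl₁⟩ := exists_lt_of_lt_csSup h₁ (show sSup T₁ - ε < sSup T₁ by linarith)
  obtain ⟨t₂, ht₂, hl₂⟩ := exists_lt_of_lt_csSup h₂ (show sSup T₂ - ε < sSup T₂ by linarith)
  have h3 := h t₁ ht₁ t₂ ht₂
  have h4 : min (sSup T₁) (sSup T₂) - ε ≤ min t₁ t₂ :=
    le_min (by linarith [min_le_left (sSup T₁) (sSup T₂)])
      (by linarith [min_le_right (sSup T₁) (sSup T₂)])
  linarith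

theorem sInf_le_max' {T₁ T₂ T₃ : Set ℝ} (h₁ : T₁.Nonempty) (h₂ : T₂.Nonempty)
    (h : ∀ t₁ ∈ T₁, ∀ t₂ ∈ T₂, sInf T₃ ≤ max t₁ t₂) :
    sInf T₃ ≤ max (sInf T₁) (sInf T₂) := by
  refine le_of_forall_pos_le_add fun ε hε => ?_
  obtain ⟨t₁, ht₁, hl₁⟩ := exists_lt_of_csInf_lt h₁ (show sInf T₁ < sInf T₁ + ε by linarith)
  obtain ⟨t₂, ht₂, hl₂⟩ := exists_lt_of_csInf_lt h₂ (show sInf T₂ < sInf T₂ + ε by linarith)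
  have h3 := h t₁ ht₁ t₂ ht₂
  have h4 : max t₁ t₂ ≤ max (sInf T₁) (sInf T₂) + ε :=
    max_le (by linarith [le_max_left (sInf T₁) (sInf T₂)])
      (by linarith [le_max_right (sInf T₁) (sInf T₂)])
  linarith

variable (K : Type*) [Field K] {V : Type*} [AddCommGroup V] [Module K V] {br : V → V → V}

/-- `r`-component of the bracket, as a standalone function. -/
noncomputable def brSup (br : V → V → V) (f g : V → ℝ) (x : V) : ℝ :=
  sSup (insert 0 (bracketRepMin K br f g x))

/-- `r̂`-component of the bracket, as a standalone function. -/
noncomputable def brInf (br : V → V → V) (f g : V → ℝ) (x : V) : ℝ :=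
  sInf (insert 1 (bracketRepMax K br f g x))

theorem repMin_subset_Icc {f g : V → ℝ}
    (hf : ∀ v, f v ∈ Icc (0:ℝ) 1) (hg : ∀ v, g v ∈ Icc (0:ℝ) 1) (x : V) :
    insert (0:ℝ) (bracketRepMin K br f g x) ⊆ Icc (0:ℝ) 1 := by
  rintro t ht
  rcases Set.mem_insert_iff.mp ht with rfl | ⟨n, c, a, b, hx, rfl⟩
  · exact ⟨le_refl _, zero_le_one⟩
  refine ⟨Finset.le_inf' _ _ fun i _ => le_min (hf (a i)).1 (hg (b i)).1, ?_⟩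
  exact le_trans (Finset.inf'_le _ (Finset.mem_univ 0))
    (le_trans (min_le_left _ _) (hf (a 0)).2)

theorem repMax_subset_Icc {f g : V → ℝ}
    (hf : ∀ v, f v ∈ Icc (0:ℝ) 1) (hg : ∀ v, g v ∈ Icc (0:ℝ) 1) (x : V) :
    insert (1:ℝ) (bracketRepMax K br f g x) ⊆ Icc (0:ℝ) 1 := by
  rintro t ht
  rcases Set.mem_insert_iff.mp ht with rfl | ⟨n, c, a, b, hx, rfl⟩
  · exact ⟨zero_le_one, le_refl _⟩
  refine ⟨le_trans (hf (a 0)).1 (le_trans (le_max_left _ _)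
    (Finset.le_sup' (fun i => max (f (a i)) (g (b i))) (Finset.mem_univ 0))), ?_⟩
  exact Finset.sup'_le _ _ fun i _ => max_le (hf (a i)).2 (hg (b i)).2

theorem repMin_bddAbove {f g : V → ℝ}
    (hf : ∀ v, f v ∈ Icc (0:ℝ) 1) (hg : ∀ v, g v ∈ Icc (0:ℝ) 1) (x : V) :
    BddAbove (insert (0:ℝ) (bracketRepMin K br f g x)) :=
  BddAbove.mono (repMin_subset_Icc K hf hg x) bddAbove_Icc

theorem repMax_bddBelow {f g : V → ℝ}
    (hf : ∀ v, f v ∈ Icc (0:ℝ) 1) (hg : ∀ v, g v ∈ Icc (0:ℝ) 1) (x : V) :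
    BddBelow (insert (1:ℝ) (bracketRepMax K br f g x)) :=
  BddBelow.mono (repMax_subset_Icc K hf hg x) bddBelow_Icc

theorem brSup_mem_Icc {f g : V → ℝ}
    (hf : ∀ v, f v ∈ Icc (0:ℝ) 1) (hg : ∀ v, g v ∈ Icc (0:ℝ) 1) (x : V) :
    brSup K br f g x ∈ Icc (0:ℝ) 1 :=
  ⟨le_csSup (repMin_bddAbove K hf hg x) (Set.mem_insert _ _),
    csSup_le (Set.insert_nonempty _ _) fun t ht => (repMin_subset_Icc K hf hg x ht).2⟩

theorem brInf_mem_Icc {f g : V → ℝ}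
    (hf : ∀ v, f v ∈ Icc (0:ℝ) 1) (hg : ∀ v, g v ∈ Icc (0:ℝ) 1) (x : V) :
    brInf K br f g x ∈ Icc (0:ℝ) 1 :=
  ⟨le_csInf (Set.insert_nonempty _ _) fun t ht => (repMax_subset_Icc K hf hg x ht).1,
    csInf_le (repMax_bddBelow K hf hg x) (Set.mem_insert _ _)⟩

end Aux
section Aux2

open Set

variable (K : Type*) [Field K] {V : Type*} [AddCommGroup V] [Module K V] {br : V → V → V}

theorem repMin_concat {f g : V → ℝ} {x y t₁ t₂ : _}
    (h₁ : t₁ ∈ bracketRepMin K br f g x) (h₂ : t₂ ∈ bracketRepMin K br f g y) :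
    min t₁ t₂ ∈ bracketRepMin K br f g (x + y) := by
  obtain ⟨n, c, a, b, hx, rfl⟩ := h₁
  obtain ⟨m, d, a', b', hy, rfl⟩ := h₂
  have e : Fin (n + 1 + m + 1) ≃ Fin ((n + 1) + (m + 1)) := finCongr (by omega)
  refine ⟨n + 1 + m, fun i => Fin.append c d (e i), fun i => Fin.append a a' (e i),
    fun i => Fin.append b b' (e i), ?_, ?_⟩
  · have h := Fintype.sum_equiv e
      (fun i => Fin.append c d (e i) • br (Fin.append a a' (e i)) (Fin.append b b' (e i)))
      (fun j => Fin.append c d j • br (Fin.append a a' j) (Fin.append b b' j))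
      (fun i => rfl)
    rw [h, Fin.sum_univ_add]
    simp only [Fin.append_left, Fin.append_right]
    rw [← hx, ← hy]
  · refine le_antisymm (Finset.le_inf' _ _ fun i _ => ?_) (le_min ?_ ?_)
    · refine Fin.addCases (motive := fun j =>
        min (Finset.univ.inf' Finset.univ_nonempty fun i => min (f (a i)) (g (b i)))
          (Finset.univ.inf' Finset.univ_nonempty fun i => min (f (a' i)) (g (b' i))) ≤
          min (f (Fin.append a a' j)) (g (Fin.append b b' j))) (fun j => ?_) (fun j => ?_) (e i)
      · simp only [Fin.append_left]
        exact le_trans (min_le_left _ _)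
          (Finset.inf'_le (fun i => min (f (a i)) (g (b i))) (Finset.mem_univ j))
      · simp only [Fin.append_right]
        exact le_trans (min_le_right _ _)
          (Finset.inf'_le (fun i => min (f (a' i)) (g (b' i))) (Finset.mem_univ j))
    · refine Finset.le_inf' _ _ fun j _ => ?_
      have h := Finset.inf'_le
        (fun i => min (f (Fin.append a a' (e i))) (g (Fin.append b b' (e i))))
        (Finset.mem_univ (e.symm (Fin.castAdd (m + 1) j)))
      simp only [Equiv.apply_symm_apply, Fin.append_left] at h
      exact h
    · refine Finset.le_inf' _ _ fun j _ => ?_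
      have h := Finset.inf'_le
        (fun i => min (f (Fin.append a a' (e i))) (g (Fin.append b b' (e i))))
        (Finset.mem_univ (e.symm (Fin.natAdd (n + 1) j)))
      simp only [Equiv.apply_symm_apply, Fin.append_right] at h
      exact h

theorem repMax_concat {f g : V → ℝ} {x y t₁ t₂ : _}
    (h₁ : t₁ ∈ bracketRepMax K br f g x) (h₂ : t₂ ∈ bracketRepMax K br f g y) :
    max t₁ t₂ ∈ bracketRepMax K br f g (x + y) := by
  obtain ⟨n, c, a, b, hx, rfl⟩ := h₁
  obtain ⟨m, d, a', b', hy, rfl⟩ := h₂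
  have e : Fin (n + 1 + m + 1) ≃ Fin ((n + 1) + (m + 1)) := finCongr (by omega)
  refine ⟨n + 1 + m, fun i => Fin.append c d (e i), fun i => Fin.append a a' (e i),
    fun i => Fin.append b b' (e i), ?_, ?_⟩
  · have h := Fintype.sum_equiv e
      (fun i => Fin.append c d (e i) • br (Fin.append a a' (e i)) (Fin.append b b' (e i)))
      (fun j => Fin.append c d j • br (Fin.append a a' j) (Fin.append b b' j))
      (fun i => rfl)
    rw [h, Fin.sum_univ_add]
    simp only [Fin.append_left, Fin.append_right]
    rw [← hx, ← hy]
  · refine le_antisymm (max_le ?_ ?_) (Finset.sup'_le _ _ fun i _ => ?_)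
    · refine Finset.sup'_le _ _ fun j _ => ?_
      have h := Finset.le_sup'
        (fun i => max (f (Fin.append a a' (e i))) (g (Fin.append b b' (e i))))
        (Finset.mem_univ (e.symm (Fin.castAdd (m + 1) j)))
      simp only [Equiv.apply_symm_apply, Fin.append_left] at h
      exact h
    · refine Finset.sup'_le _ _ fun j _ => ?_
      have h := Finset.le_sup'
        (fun i => max (f (Fin.append a a' (e i))) (g (Fin.append b b' (e i))))
        (Finset.mem_univ (e.symm (Fin.natAdd (n + 1) j)))
      simp only [Equiv.apply_symm_apply, Fin.append_right] at h
      exact h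
    · refine Fin.addCases (motive := fun j =>
        max (f (Fin.append a a' j)) (g (Fin.append b b' j)) ≤
        max (Finset.univ.sup' Finset.univ_nonempty fun i => max (f (a i)) (g (b i)))
          (Finset.univ.sup' Finset.univ_nonempty fun i => max (f (a' i)) (g (b' i))))
        (fun j => ?_) (fun j => ?_) (e i)
      · simp only [Fin.append_left]
        exact le_trans (Finset.le_sup' (fun i => max (f (a i)) (g (b i))) (Finset.mem_univ j))
          (le_max_left _ _)
      · simp only [Fin.append_right]
        exact le_trans (Finset.le_sup' (fun i => max (f (a' i)) (g (b' i))) (Finset.mem_univ j))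
          (le_max_right _ _)

theorem repMin_smul {f g : V → ℝ} {x t : _} (h : t ∈ bracketRepMin K br f g x) (c : K) :
    t ∈ bracketRepMin K br f g (c • x) := by
  obtain ⟨n, d, a, b, hx, rfl⟩ := h
  refine ⟨n, fun i => c * d i, a, b, ?_, rfl⟩
  rw [hx, Finset.smul_sum]
  exact Finset.sum_congr rfl fun i _ => (mul_smul c (d i) _).symm

theorem repMax_smul {f g : V → ℝ} {x t : _} (h : t ∈ bracketRepMax K br f g x) (c : K) :
    t ∈ bracketRepMax K br f g (c • x) := by
  obtain ⟨n, d, a, b, hx, rfl⟩ := h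
  refine ⟨n, fun i => c * d i, a, b, ?_, rfl⟩
  rw [hx, Finset.smul_sum]
  exact Finset.sum_congr rfl fun i _ => (mul_smul c (d i) _).symm

theorem br_zero_zero (hal : ∀ x y z : V, br (x + y) z = br x z + br y z) : br 0 0 = 0 := by
  have h := hal 0 0 0
  rw [add_zero] at h
  exact left_eq_add.mp h

theorem repMin_zero_mem (h0 : br 0 0 = 0) (f g : V → ℝ) :
    min (f 0) (g 0) ∈ bracketRepMin K br f g 0 :=
  ⟨0, fun _ => 1, fun _ => 0, fun _ => 0, by simp [h0], by
    simp [Finset.inf'_const]⟩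

theorem repMax_zero_mem (h0 : br 0 0 = 0) (f g : V → ℝ) :
    max (f 0) (g 0) ∈ bracketRepMax K br f g 0 :=
  ⟨0, fun _ => 1, fun _ => 0, fun _ => 0, by simp [h0], by
    simp [Finset.sup'_const]⟩

end Aux2
section Aux3

open Set

variable (K : Type*) [Field K] {V : Type*} [AddCommGroup V] [Module K V] {br : V → V → V}

theorem brSup_add {f g : V → ℝ}
    (hf : ∀ v, f v ∈ Icc (0:ℝ) 1) (hg : ∀ v, g v ∈ Icc (0:ℝ) 1) (x y : V) :
    min (brSup K br f g x) (brSup K br f g y) ≤ brSup K br f g (x + y) := by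
  refine min_sSup_le' (Set.insert_nonempty _ _) (Set.insert_nonempty _ _) ?_
  intro t₁ ht₁ t₂ ht₂
  have hb := repMin_bddAbove K (br := br) hf hg (x + y)
  rcases Set.mem_insert_iff.mp ht₁ with rfl | h₁
  · exact le_trans (min_le_left _ _) (le_csSup hb (Set.mem_insert _ _))
  rcases Set.mem_insert_iff.mp ht₂ with rfl | h₂
  · exact le_trans (min_le_right _ _) (le_csSup hb (Set.mem_insert _ _))
  · exact le_csSup hb (Set.mem_insert_of_mem _ (repMin_concat K h₁ h₂))

theorem brInf_add {f g : V → ℝ}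
    (hf : ∀ v, f v ∈ Icc (0:ℝ) 1) (hg : ∀ v, g v ∈ Icc (0:ℝ) 1) (x y : V) :
    brInf K br f g (x + y) ≤ max (brInf K br f g x) (brInf K br f g y) := by
  refine sInf_le_max' (Set.insert_nonempty _ _) (Set.insert_nonempty _ _) ?_
  intro t₁ ht₁ t₂ ht₂
  have hb := repMax_bddBelow K (br := br) hf hg (x + y)
  rcases Set.mem_insert_iff.mp ht₁ with rfl | h₁
  · exact le_trans (csInf_le hb (Set.mem_insert _ _)) (le_max_left _ _)
  rcases Set.mem_insert_iff.mp ht₂ with rfl | h₂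
  · exact le_trans (csInf_le hb (Set.mem_insert _ _)) (le_max_right _ _)
  · exact csInf_le hb (Set.mem_insert_of_mem _ (repMax_concat K h₁ h₂))

theorem brSup_smul {f g : V → ℝ}
    (hf : ∀ v, f v ∈ Icc (0:ℝ) 1) (hg : ∀ v, g v ∈ Icc (0:ℝ) 1) (c : K) (x : V) :
    brSup K br f g x ≤ brSup K br f g (c • x) := by
  refine csSup_le (Set.insert_nonempty _ _) ?_
  intro t ht
  rcases Set.mem_insert_iff.mp ht with rfl | h
  · exact (brSup_mem_Icc K hf hg (c • x)).1
  · exact le_csSup (repMin_bddAbove K hf hg (c • x))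
      (Set.mem_insert_of_mem _ (repMin_smul K h c))

theorem brInf_smul {f g : V → ℝ}
    (hf : ∀ v, f v ∈ Icc (0:ℝ) 1) (hg : ∀ v, g v ∈ Icc (0:ℝ) 1) (c : K) (x : V) :
    brInf K br f g (c • x) ≤ brInf K br f g x := by
  refine le_csInf (Set.insert_nonempty _ _) ?_
  intro t ht
  rcases Set.mem_insert_iff.mp ht with rfl | h
  · exact (brInf_mem_Icc K hf hg (c • x)).2
  · exact csInf_le (repMax_bddBelow K hf hg (c • x))
      (Set.mem_insert_of_mem _ (repMax_smul K h c))

theorem brSup_zero (hal : ∀ x y z : V, br (x + y) z = br x z + br y z) {f g : V → ℝ}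
    (hf : ∀ v, f v ∈ Icc (0:ℝ) 1) (hg : ∀ v, g v ∈ Icc (0:ℝ) 1)
    (hf0 : f 0 = 1) (hg0 : g 0 = 1) : brSup K br f g 0 = 1 := by
  refine le_antisymm (brSup_mem_Icc K hf hg 0).2 ?_
  have h := repMin_zero_mem K (br_zero_zero hal) f g
  rw [hf0, hg0, min_self] at h
  exact le_csSup (repMin_bddAbove K hf hg 0) (Set.mem_insert_of_mem _ h)

theorem brInf_zero (hal : ∀ x y z : V, br (x + y) z = br x z + br y z) {f g : V → ℝ}
    (hf : ∀ v, f v ∈ Icc (0:ℝ) 1) (hg : ∀ v, g v ∈ Icc (0:ℝ) 1)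
    (hf0 : f 0 = 0) (hg0 : g 0 = 0) : brInf K br f g 0 = 0 := by
  refine le_antisymm ?_ (brInf_mem_Icc K hf hg 0).1
  have h := repMax_zero_mem K (br_zero_zero hal) f g
  rw [hf0, hg0, max_self] at h
  exact csInf_le (repMax_bddBelow K hf hg 0) (Set.mem_insert_of_mem _ h)

theorem brSup_mono {f g f' g' : V → ℝ}
    (hf' : ∀ v, f' v ∈ Icc (0:ℝ) 1) (hg' : ∀ v, g' v ∈ Icc (0:ℝ) 1)
    (hff : ∀ v, f v ≤ f' v) (hgg : ∀ v, g v ≤ g' v) (x : V) :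
    brSup K br f g x ≤ brSup K br f' g' x := by
  refine csSup_le (Set.insert_nonempty _ _) ?_
  intro t ht
  rcases Set.mem_insert_iff.mp ht with rfl | ⟨n, c, a, b, hx, rfl⟩
  · exact (brSup_mem_Icc K hf' hg' x).1
  refine le_trans (Finset.le_inf' Finset.univ_nonempty (fun i => min (f' (a i)) (g' (b i))) fun i _ =>
    le_trans (Finset.inf'_le (fun i => min (f (a i)) (g (b i))) (Finset.mem_univ i))
      (min_le_min (hff _) (hgg _))) ?_
  exact le_csSup (repMin_bddAbove K hf' hg' x) (Set.mem_insert_of_mem _ ⟨n, c, a, b, hx, rfl⟩)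

theorem brInf_mono {f g f' g' : V → ℝ}
    (hf : ∀ v, f v ∈ Icc (0:ℝ) 1) (hg : ∀ v, g v ∈ Icc (0:ℝ) 1)
    (hff : ∀ v, f v ≤ f' v) (hgg : ∀ v, g v ≤ g' v) (x : V) :
    brInf K br f g x ≤ brInf K br f' g' x := by
  refine le_csInf (Set.insert_nonempty _ _) ?_
  intro t ht
  rcases Set.mem_insert_iff.mp ht with rfl | ⟨n, c, a, b, hx, rfl⟩
  · exact (brInf_mem_Icc K hf hg x).2
  refine le_trans (csInf_le (repMax_bddBelow K hf hg x)
    (Set.mem_insert_of_mem _ ⟨n, c, a, b, hx, rfl⟩)) ?_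
  exact Finset.sup'_le Finset.univ_nonempty (fun i => max (f (a i)) (g (b i))) fun i _ =>
    le_trans (max_le_max (hff _) (hgg _))
      (Finset.le_sup' (fun i => max (f' (a i)) (g' (b i))) (Finset.mem_univ i))

theorem brSup_supp {W₁ W₂ W₃ : Submodule K V} (hgr : ∀ a ∈ W₁, ∀ b ∈ W₂, br a b ∈ W₃)
    {f g : V → ℝ} (hf : ∀ v ∉ W₁, f v = 0) (hg : ∀ v ∉ W₂, g v = 0)
    {x : V} (hx : x ∉ W₃) : brSup K br f g x = 0 := by
  have hb : ∀ t ∈ insert (0:ℝ) (bracketRepMin K br f g x), t ≤ 0 := by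
    rintro t ht
    rcases Set.mem_insert_iff.mp ht with rfl | ⟨n, c, a, b, hxr, rfl⟩
    · exact le_refl _
    by_cases hall : ∀ i, a i ∈ W₁ ∧ b i ∈ W₂
    · exact absurd (hxr ▸ Submodule.sum_mem _ fun i _ =>
        Submodule.smul_mem _ _ (hgr _ (hall i).1 _ (hall i).2)) hx
    push_neg at hall
    obtain ⟨i, hi⟩ := hall
    refine le_trans (Finset.inf'_le (fun i => min (f (a i)) (g (b i))) (Finset.mem_univ i)) ?_
    by_cases hai : a i ∈ W₁
    · rw [hg _ (hi hai)]; exact min_le_right _ _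
    · rw [hf _ hai]; exact min_le_left _ _
  exact le_antisymm (csSup_le (Set.insert_nonempty _ _) hb)
    (le_csSup ⟨0, fun t ht => hb t ht⟩ (Set.mem_insert _ _))

theorem brInf_supp {W₁ W₂ W₃ : Submodule K V} (hgr : ∀ a ∈ W₁, ∀ b ∈ W₂, br a b ∈ W₃)
    {f g : V → ℝ} (hf : ∀ v ∉ W₁, f v = 1) (hg : ∀ v ∉ W₂, g v = 1)
    {x : V} (hx : x ∉ W₃) : brInf K br f g x = 1 := by
  have hb : ∀ t ∈ insert (1:ℝ) (bracketRepMax K br f g x), 1 ≤ t := by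
    rintro t ht
    rcases Set.mem_insert_iff.mp ht with rfl | ⟨n, c, a, b, hxr, rfl⟩
    · exact le_refl _
    by_cases hall : ∀ i, a i ∈ W₁ ∧ b i ∈ W₂
    · exact absurd (hxr ▸ Submodule.sum_mem _ fun i _ =>
        Submodule.smul_mem _ _ (hgr _ (hall i).1 _ (hall i).2)) hx
    push_neg at hall
    obtain ⟨i, hi⟩ := hall
    refine le_trans ?_ (Finset.le_sup' (fun i => max (f (a i)) (g (b i))) (Finset.mem_univ i))
    by_cases hai : a i ∈ W₁
    · rw [hg _ (hi hai)]; exact le_max_right _ _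
    · rw [hf _ hai]; exact le_max_left _ _
  exact le_antisymm (csInf_le ⟨1, fun t ht => hb t ht⟩ (Set.mem_insert _ _))
    (le_csInf (Set.insert_nonempty _ _) hb)

theorem brSup_add_brInf_le_one {f g fh gh : V → ℝ}
    (hfh : ∀ v, fh v ∈ Icc (0:ℝ) 1) (hgh : ∀ v, gh v ∈ Icc (0:ℝ) 1)
    (hfs : ∀ v, f v + fh v ≤ 1) (hgs : ∀ v, g v + gh v ≤ 1) (x : V) :
    brSup K br f g x + brInf K br fh gh x ≤ 1 := by
  have hI := brInf_mem_Icc K (br := br) hfh hgh x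
  have h : brSup K br f g x ≤ 1 - brInf K br fh gh x := by
    refine csSup_le (Set.insert_nonempty _ _) ?_
    rintro t ht
    rcases Set.mem_insert_iff.mp ht with rfl | ⟨n, c, a, b, hx, rfl⟩
    · linarith [hI.2]
    have h2 : brInf K br fh gh x ≤
        Finset.univ.sup' Finset.univ_nonempty fun i => max (fh (a i)) (gh (b i)) :=
      csInf_le (repMax_bddBelow K hfh hgh x) (Set.mem_insert_of_mem _ ⟨n, c, a, b, hx, rfl⟩)
    obtain ⟨i₀, -, hi₀⟩ := Finset.exists_mem_eq_sup' Finset.univ_nonempty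
      fun i => max (fh (a i)) (gh (b i))
    rw [hi₀] at h2
    have h3 : (Finset.univ.inf' Finset.univ_nonempty fun i => min (f (a i)) (g (b i))) ≤
        min (f (a i₀)) (g (b i₀)) :=
      Finset.inf'_le (fun i => min (f (a i)) (g (b i))) (Finset.mem_univ i₀)
    rcases le_total (fh (a i₀)) (gh (b i₀)) with h6 | h6
    · rw [max_eq_right h6] at h2
      linarith [min_le_right (f (a i₀)) (g (b i₀)), hgs (b i₀)]
    · rw [max_eq_left h6] at h2
      linarith [min_le_left (f (a i₀)) (g (b i₀)), hfs (a i₀)]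
  linarith

end Aux3
section Aux4

open Set

variable {K : Type*} [Field K] {V : Type*} [AddCommGroup V] [Module K V]

theorem sdSet_subset_Icc {f g : V → ℝ}
    (hf : ∀ v, f v ∈ Icc (0:ℝ) 1) (hg : ∀ v, g v ∈ Icc (0:ℝ) 1) (x : V) :
    insert (0:ℝ) {t | ∃ a b : V, x = a + b ∧ t = min (f a) (g b)} ⊆ Icc (0:ℝ) 1 := by
  rintro t ht
  rcases Set.mem_insert_iff.mp ht with rfl | ⟨a, b, hx, rfl⟩
  · exact ⟨le_refl _, zero_le_one⟩
  · exact ⟨le_min (hf a).1 (hg b).1, le_trans (min_le_left _ _) (hf a).2⟩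

theorem idSet_subset_Icc {f g : V → ℝ}
    (hf : ∀ v, f v ∈ Icc (0:ℝ) 1) (hg : ∀ v, g v ∈ Icc (0:ℝ) 1) (x : V) :
    insert (1:ℝ) {t | ∃ a b : V, x = a + b ∧ t = max (f a) (g b)} ⊆ Icc (0:ℝ) 1 := by
  rintro t ht
  rcases Set.mem_insert_iff.mp ht with rfl | ⟨a, b, hx, rfl⟩
  · exact ⟨zero_le_one, le_refl _⟩
  · exact ⟨le_trans (hf a).1 (le_max_left _ _), max_le (hf a).2 (hg b).2⟩

theorem sd_bddAbove {f g : V → ℝ}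
    (hf : ∀ v, f v ∈ Icc (0:ℝ) 1) (hg : ∀ v, g v ∈ Icc (0:ℝ) 1) (x : V) :
    BddAbove (insert (0:ℝ) {t | ∃ a b : V, x = a + b ∧ t = min (f a) (g b)}) :=
  BddAbove.mono (sdSet_subset_Icc hf hg x) bddAbove_Icc

theorem id_bddBelow {f g : V → ℝ}
    (hf : ∀ v, f v ∈ Icc (0:ℝ) 1) (hg : ∀ v, g v ∈ Icc (0:ℝ) 1) (x : V) :
    BddBelow (insert (1:ℝ) {t | ∃ a b : V, x = a + b ∧ t = max (f a) (g b)}) :=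
  BddBelow.mono (idSet_subset_Icc hf hg x) bddBelow_Icc

theorem sd_mem_Icc {f g : V → ℝ}
    (hf : ∀ v, f v ∈ Icc (0:ℝ) 1) (hg : ∀ v, g v ∈ Icc (0:ℝ) 1) (x : V) :
    supDecomp f g x ∈ Icc (0:ℝ) 1 :=
  ⟨le_csSup (sd_bddAbove hf hg x) (Set.mem_insert _ _),
    csSup_le (Set.insert_nonempty _ _) fun t ht => (sdSet_subset_Icc hf hg x ht).2⟩

theorem id_mem_Icc {f g : V → ℝ}
    (hf : ∀ v, f v ∈ Icc (0:ℝ) 1) (hg : ∀ v, g v ∈ Icc (0:ℝ) 1) (x : V) :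
    infDecomp f g x ∈ Icc (0:ℝ) 1 :=
  ⟨le_csInf (Set.insert_nonempty _ _) fun t ht => (idSet_subset_Icc hf hg x ht).1,
    csInf_le (id_bddBelow hf hg x) (Set.mem_insert _ _)⟩

theorem sd_add {f g : V → ℝ}
    (hf : ∀ v, f v ∈ Icc (0:ℝ) 1) (hg : ∀ v, g v ∈ Icc (0:ℝ) 1)
    (hfa : ∀ x y, min (f x) (f y) ≤ f (x + y)) (hga : ∀ x y, min (g x) (g y) ≤ g (x + y))
    (x y : V) : min (supDecomp f g x) (supDecomp f g y) ≤ supDecomp f g (x + y) := by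
  refine min_sSup_le' (Set.insert_nonempty _ _) (Set.insert_nonempty _ _) ?_
  intro t₁ ht₁ t₂ ht₂
  have hb := sd_bddAbove hf hg (x + y)
  rcases Set.mem_insert_iff.mp ht₁ with rfl | ⟨a, b, hx, rfl⟩
  · exact le_trans (min_le_left _ _) (le_csSup hb (Set.mem_insert _ _))
  rcases Set.mem_insert_iff.mp ht₂ with rfl | ⟨a', b', hy, rfl⟩
  · exact le_trans (min_le_right _ _) (le_csSup hb (Set.mem_insert _ _))
  refine le_trans (le_min (le_trans (le_min
      (le_trans (min_le_left _ _) (min_le_left _ _))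
      (le_trans (min_le_right _ _) (min_le_left _ _))) (hfa a a'))
    (le_trans (le_min
      (le_trans (min_le_left _ _) (min_le_right _ _))
      (le_trans (min_le_right _ _) (min_le_right _ _))) (hga b b'))) ?_
  exact le_csSup hb (Set.mem_insert_of_mem _ ⟨a + a', b + b', by rw [hx, hy]; abel, rfl⟩)

theorem id_add {f g : V → ℝ}
    (hf : ∀ v, f v ∈ Icc (0:ℝ) 1) (hg : ∀ v, g v ∈ Icc (0:ℝ) 1)
    (hfa : ∀ x y, f (x + y) ≤ max (f x) (f y)) (hga : ∀ x y, g (x + y) ≤ max (g x) (g y))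
    (x y : V) : infDecomp f g (x + y) ≤ max (infDecomp f g x) (infDecomp f g y) := by
  refine sInf_le_max' (Set.insert_nonempty _ _) (Set.insert_nonempty _ _) ?_
  intro t₁ ht₁ t₂ ht₂
  have hb := id_bddBelow hf hg (x + y)
  rcases Set.mem_insert_iff.mp ht₁ with rfl | ⟨a, b, hx, rfl⟩
  · exact le_trans (csInf_le hb (Set.mem_insert _ _)) (le_max_left _ _)
  rcases Set.mem_insert_iff.mp ht₂ with rfl | ⟨a', b', hy, rfl⟩
  · exact le_trans (csInf_le hb (Set.mem_insert _ _)) (le_max_right _ _)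
  refine le_trans (csInf_le hb
    (Set.mem_insert_of_mem _ ⟨a + a', b + b', by rw [hx, hy]; abel, rfl⟩)) ?_
  exact max_le (le_trans (hfa a a') (max_le
      (le_trans (le_max_left _ _) (le_max_left _ _))
      (le_trans (le_max_left _ _) (le_max_right _ _))))
    (le_trans (hga b b') (max_le
      (le_trans (le_max_right _ _) (le_max_left _ _))
      (le_trans (le_max_right _ _) (le_max_right _ _))))

theorem sd_smul {f g : V → ℝ}
    (hf : ∀ v, f v ∈ Icc (0:ℝ) 1) (hg : ∀ v, g v ∈ Icc (0:ℝ) 1)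
    (hfs : ∀ (c : K) v, f v ≤ f (c • v)) (hgs : ∀ (c : K) v, g v ≤ g (c • v))
    (c : K) (x : V) : supDecomp f g x ≤ supDecomp f g (c • x) := by
  refine csSup_le (Set.insert_nonempty _ _) ?_
  intro t ht
  rcases Set.mem_insert_iff.mp ht with rfl | ⟨a, b, hx, rfl⟩
  · exact (sd_mem_Icc hf hg (c • x)).1
  refine le_trans (min_le_min (hfs c a) (hgs c b)) ?_
  exact le_csSup (sd_bddAbove hf hg (c • x))
    (Set.mem_insert_of_mem _ ⟨c • a, c • b, by rw [hx, smul_add], rfl⟩)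

theorem id_smul {f g : V → ℝ}
    (hf : ∀ v, f v ∈ Icc (0:ℝ) 1) (hg : ∀ v, g v ∈ Icc (0:ℝ) 1)
    (hfs : ∀ (c : K) v, f (c • v) ≤ f v) (hgs : ∀ (c : K) v, g (c • v) ≤ g v)
    (c : K) (x : V) : infDecomp f g (c • x) ≤ infDecomp f g x := by
  refine le_csInf (Set.insert_nonempty _ _) ?_
  intro t ht
  rcases Set.mem_insert_iff.mp ht with rfl | ⟨a, b, hx, rfl⟩
  · exact (id_mem_Icc hf hg (c • x)).2
  refine le_trans (csInf_le (id_bddBelow hf hg (c • x))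
    (Set.mem_insert_of_mem _ ⟨c • a, c • b, by rw [hx, smul_add], rfl⟩)) ?_
  exact max_le_max (hfs c a) (hgs c b)

theorem sd_zero {f g : V → ℝ}
    (hf : ∀ v, f v ∈ Icc (0:ℝ) 1) (hg : ∀ v, g v ∈ Icc (0:ℝ) 1)
    (hf0 : f 0 = 1) (hg0 : g 0 = 1) : supDecomp f g (0 : V) = 1 := by
  refine le_antisymm (sd_mem_Icc hf hg 0).2 ?_
  exact le_csSup (sd_bddAbove hf hg 0)
    (Set.mem_insert_of_mem _ ⟨0, 0, (add_zero 0).symm, by rw [hf0, hg0, min_self]⟩)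

theorem id_zero {f g : V → ℝ}
    (hf : ∀ v, f v ∈ Icc (0:ℝ) 1) (hg : ∀ v, g v ∈ Icc (0:ℝ) 1)
    (hf0 : f 0 = 0) (hg0 : g 0 = 0) : infDecomp f g (0 : V) = 0 := by
  refine le_antisymm ?_ (id_mem_Icc hf hg 0).1
  exact csInf_le (id_bddBelow hf hg 0)
    (Set.mem_insert_of_mem _ ⟨0, 0, (add_zero 0).symm, by rw [hf0, hg0, max_self]⟩)

theorem le_sd_left {f g : V → ℝ}
    (hf : ∀ v, f v ∈ Icc (0:ℝ) 1) (hg : ∀ v, g v ∈ Icc (0:ℝ) 1)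
    (hg0 : g 0 = 1) (x : V) : f x ≤ supDecomp f g x :=
  le_csSup (sd_bddAbove hf hg x) (Set.mem_insert_of_mem _
    ⟨x, 0, (add_zero x).symm, by rw [hg0]; exact (min_eq_left (hf x).2).symm⟩)

theorem le_sd_right {f g : V → ℝ}
    (hf : ∀ v, f v ∈ Icc (0:ℝ) 1) (hg : ∀ v, g v ∈ Icc (0:ℝ) 1)
    (hf0 : f 0 = 1) (x : V) : g x ≤ supDecomp f g x :=
  le_csSup (sd_bddAbove hf hg x) (Set.mem_insert_of_mem _
    ⟨0, x, (zero_add x).symm, by rw [hf0]; exact (min_eq_right (hg x).2).symm⟩)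

theorem id_le_left {f g : V → ℝ}
    (hf : ∀ v, f v ∈ Icc (0:ℝ) 1) (hg : ∀ v, g v ∈ Icc (0:ℝ) 1)
    (hg0 : g 0 = 0) (x : V) : infDecomp f g x ≤ f x :=
  csInf_le (id_bddBelow hf hg x) (Set.mem_insert_of_mem _
    ⟨x, 0, (add_zero x).symm, by rw [hg0]; exact (max_eq_left (hf x).1).symm⟩)

theorem id_le_right {f g : V → ℝ}
    (hf : ∀ v, f v ∈ Icc (0:ℝ) 1) (hg : ∀ v, g v ∈ Icc (0:ℝ) 1)
    (hf0 : f 0 = 0) (x : V) : infDecomp f g x ≤ g x :=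
  csInf_le (id_bddBelow hf hg x) (Set.mem_insert_of_mem _
    ⟨0, x, (zero_add x).symm, by rw [hf0]; exact (max_eq_right (hg x).1).symm⟩)

theorem sd_supp {W : Submodule K V} {f g : V → ℝ}
    (hf : ∀ v ∉ W, f v = 0) (hg : ∀ v ∉ W, g v = 0)
    {x : V} (hx : x ∉ W) : supDecomp f g x = 0 := by
  have hb : ∀ t ∈ insert (0:ℝ) {t | ∃ a b : V, x = a + b ∧ t = min (f a) (g b)}, t ≤ 0 := by
    rintro t ht
    rcases Set.mem_insert_iff.mp ht with rfl | ⟨a, b, hxr, rfl⟩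
    · exact le_refl _
    by_cases ha : a ∈ W
    · have hbW : b ∉ W := fun hbW => hx (hxr ▸ Submodule.add_mem _ ha hbW)
      rw [hg _ hbW]; exact min_le_right _ _
    · rw [hf _ ha]; exact min_le_left _ _
  exact le_antisymm (csSup_le (Set.insert_nonempty _ _) hb)
    (le_csSup ⟨0, fun t ht => hb t ht⟩ (Set.mem_insert _ _))

theorem id_supp {W : Submodule K V} {f g : V → ℝ}
    (hf : ∀ v ∉ W, f v = 1) (hg : ∀ v ∉ W, g v = 1)
    {x : V} (hx : x ∉ W) : infDecomp f g x = 1 := by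
  have hb : ∀ t ∈ insert (1:ℝ) {t | ∃ a b : V, x = a + b ∧ t = max (f a) (g b)}, 1 ≤ t := by
    rintro t ht
    rcases Set.mem_insert_iff.mp ht with rfl | ⟨a, b, hxr, rfl⟩
    · exact le_refl _
    by_cases ha : a ∈ W
    · have hbW : b ∉ W := fun hbW => hx (hxr ▸ Submodule.add_mem _ ha hbW)
      rw [hg _ hbW]; exact le_max_right _ _
    · rw [hf _ ha]; exact le_max_left _ _
  exact le_antisymm (csInf_le ⟨1, fun t ht => hb t ht⟩ (Set.mem_insert _ _))
    (le_csInf (Set.insert_nonempty _ _) hb)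

theorem sd_add_id_le_one {f g fh gh : V → ℝ}
    (hfh : ∀ v, fh v ∈ Icc (0:ℝ) 1) (hgh : ∀ v, gh v ∈ Icc (0:ℝ) 1)
    (hfs : ∀ v, f v + fh v ≤ 1) (hgs : ∀ v, g v + gh v ≤ 1) (x : V) :
    supDecomp f g x + infDecomp fh gh x ≤ 1 := by
  have hI := id_mem_Icc hfh hgh x
  have h : supDecomp f g x ≤ 1 - infDecomp fh gh x := by
    refine csSup_le (Set.insert_nonempty _ _) ?_
    rintro t ht
    rcases Set.mem_insert_iff.mp ht with rfl | ⟨a, b, hx, rfl⟩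
    · linarith [hI.2]
    have h2 : infDecomp fh gh x ≤ max (fh a) (gh b) :=
      csInf_le (id_bddBelow hfh hgh x) (Set.mem_insert_of_mem _ ⟨a, b, hx, rfl⟩)
    rcases le_total (fh a) (gh b) with h6 | h6
    · rw [max_eq_right h6] at h2
      linarith [min_le_right (f a) (g b), hgs b]
    · rw [max_eq_left h6] at h2
      linarith [min_le_left (f a) (g b), hfs a]
  linarith

end Aux4
section Aux5

open Set

variable (K : Type*) [Field K] {V : Type*} [AddCommGroup V] [Module K V] {br : V → V → V}

theorem exists_sd_decomp {f f0 f1 : V → ℝ} (hf : ∀ v, f v = supDecomp f0 f1 v)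
    (hf0 : ∀ v, f0 v ∈ Icc (0:ℝ) 1) (hf10 : f1 0 = 1) (v : V) {ε : ℝ} (hε : 0 < ε) :
    ∃ u w, v = u + w ∧ f v - ε < min (f0 u) (f1 w) := by
  have h1 : f v - ε < sSup (insert 0 {t | ∃ a b : V, v = a + b ∧ t = min (f0 a) (f1 b)}) := by
    calc f v - ε < f v := by linarith
    _ = _ := hf v
  obtain ⟨t, ht, hlt⟩ := exists_lt_of_lt_csSup (Set.insert_nonempty _ _) h1
  rcases Set.mem_insert_iff.mp ht with rfl | ⟨u, w, hv, rfl⟩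
  · refine ⟨v, 0, (add_zero v).symm, ?_⟩
    rw [hf10, min_eq_left (hf0 v).2]
    linarith [(hf0 v).1]
  · exact ⟨u, w, hv, hlt⟩

theorem exists_id_decomp {f f0 f1 : V → ℝ} (hf : ∀ v, f v = infDecomp f0 f1 v)
    (hf0 : ∀ v, f0 v ∈ Icc (0:ℝ) 1) (hf10 : f1 0 = 0) (v : V) {ε : ℝ} (hε : 0 < ε) :
    ∃ u w, v = u + w ∧ max (f0 u) (f1 w) < f v + ε := by
  have h1 : sInf (insert 1 {t | ∃ a b : V, v = a + b ∧ t = max (f0 a) (f1 b)}) < f v + ε := by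
    calc sInf (insert 1 {t | ∃ a b : V, v = a + b ∧ t = max (f0 a) (f1 b)})
        = f v := (hf v).symm
    _ < f v + ε := by linarith
  obtain ⟨t, ht, hlt⟩ := exists_lt_of_csInf_lt (Set.insert_nonempty _ _) h1
  rcases Set.mem_insert_iff.mp ht with rfl | ⟨u, w, hv, rfl⟩
  · refine ⟨v, 0, (add_zero v).symm, ?_⟩
    rw [hf10, max_eq_left (hf0 v).1]
    linarith [(hf0 v).2]
  · exact ⟨u, w, hv, hlt⟩

theorem sd_le_brSup {fA fA0 fA1 fB fB0 fB1 : V → ℝ}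
    (hfA : ∀ v, fA v ∈ Icc (0:ℝ) 1) (hfB : ∀ v, fB v ∈ Icc (0:ℝ) 1)
    (h0A : ∀ v, fA0 v ≤ fA v) (h1A : ∀ v, fA1 v ≤ fA v)
    (h0B : ∀ v, fB0 v ≤ fB v) (h1B : ∀ v, fB1 v ≤ fB v) (x : V) :
    supDecomp (supDecomp (brSup K br fA0 fB0) (brSup K br fA1 fB1))
      (supDecomp (brSup K br fA0 fB1) (brSup K br fA1 fB0)) x ≤ brSup K br fA fB x := by
  have hbr : ∀ v, brSup K br fA fB v ∈ Icc (0:ℝ) 1 := brSup_mem_Icc K hfA hfB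
  have hE : ∀ p, supDecomp (brSup K br fA0 fB0) (brSup K br fA1 fB1) p ≤
      brSup K br fA fB p := by
    intro p
    refine csSup_le (Set.insert_nonempty _ _) ?_
    rintro t ht
    rcases Set.mem_insert_iff.mp ht with rfl | ⟨p₁, p₂, hp, rfl⟩
    · exact (hbr p).1
    refine le_trans (min_le_min (brSup_mono K hfA hfB h0A h0B p₁)
      (brSup_mono K hfA hfB h1A h1B p₂)) ?_
    rw [hp]; exact brSup_add K hfA hfB p₁ p₂
  have hO : ∀ q, supDecomp (brSup K br fA0 fB1) (brSup K br fA1 fB0) q ≤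
      brSup K br fA fB q := by
    intro q
    refine csSup_le (Set.insert_nonempty _ _) ?_
    rintro t ht
    rcases Set.mem_insert_iff.mp ht with rfl | ⟨q₁, q₂, hq, rfl⟩
    · exact (hbr q).1
    refine le_trans (min_le_min (brSup_mono K hfA hfB h0A h1B q₁)
      (brSup_mono K hfA hfB h1A h0B q₂)) ?_
    rw [hq]; exact brSup_add K hfA hfB q₁ q₂
  refine csSup_le (Set.insert_nonempty _ _) ?_
  rintro t ht
  rcases Set.mem_insert_iff.mp ht with rfl | ⟨p, q, hpq, rfl⟩
  · exact (hbr x).1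
  refine le_trans (min_le_min (hE p) (hO q)) ?_
  rw [hpq]; exact brSup_add K hfA hfB p q

theorem brInf_le_id {fA fA0 fA1 fB fB0 fB1 : V → ℝ}
    (hfA : ∀ v, fA v ∈ Icc (0:ℝ) 1) (hfB : ∀ v, fB v ∈ Icc (0:ℝ) 1)
    (h0A : ∀ v, fA v ≤ fA0 v) (h1A : ∀ v, fA v ≤ fA1 v)
    (h0B : ∀ v, fB v ≤ fB0 v) (h1B : ∀ v, fB v ≤ fB1 v) (x : V) :
    brInf K br fA fB x ≤ infDecomp (infDecomp (brInf K br fA0 fB0) (brInf K br fA1 fB1))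
      (infDecomp (brInf K br fA0 fB1) (brInf K br fA1 fB0)) x := by
  have hbr : ∀ v, brInf K br fA fB v ∈ Icc (0:ℝ) 1 := brInf_mem_Icc K hfA hfB
  have hE : ∀ p, brInf K br fA fB p ≤
      infDecomp (brInf K br fA0 fB0) (brInf K br fA1 fB1) p := by
    intro p
    refine le_csInf (Set.insert_nonempty _ _) ?_
    rintro t ht
    rcases Set.mem_insert_iff.mp ht with rfl | ⟨p₁, p₂, hp, rfl⟩
    · exact (hbr p).2
    rw [hp]
    exact le_trans (brInf_add K hfA hfB p₁ p₂)
      (max_le_max (brInf_mono K hfA hfB h0A h0B p₁) (brInf_mono K hfA hfB h1A h1B p₂))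
  have hO : ∀ q, brInf K br fA fB q ≤
      infDecomp (brInf K br fA0 fB1) (brInf K br fA1 fB0) q := by
    intro q
    refine le_csInf (Set.insert_nonempty _ _) ?_
    rintro t ht
    rcases Set.mem_insert_iff.mp ht with rfl | ⟨q₁, q₂, hq, rfl⟩
    · exact (hbr q).2
    rw [hq]
    exact le_trans (brInf_add K hfA hfB q₁ q₂)
      (max_le_max (brInf_mono K hfA hfB h0A h1B q₁) (brInf_mono K hfA hfB h1A h0B q₂))
  refine le_csInf (Set.insert_nonempty _ _) ?_
  rintro t ht
  rcases Set.mem_insert_iff.mp ht with rfl | ⟨p, q, hpq, rfl⟩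
  · exact (hbr x).2
  rw [hpq]
  exact le_trans (brInf_add K hfA hfB p q) (max_le_max (hE p) (hO q))

theorem brSup_le_sd
    (hal : ∀ x y z : V, br (x + y) z = br x z + br y z)
    (har : ∀ x y z : V, br x (y + z) = br x y + br x z)
    {fA fA0 fA1 fB fB0 fB1 : V → ℝ}
    (hfA : ∀ v, fA v = supDecomp fA0 fA1 v) (hfB : ∀ v, fB v = supDecomp fB0 fB1 v)
    (hA0 : ∀ v, fA0 v ∈ Icc (0:ℝ) 1) (hA1 : ∀ v, fA1 v ∈ Icc (0:ℝ) 1)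
    (hB0 : ∀ v, fB0 v ∈ Icc (0:ℝ) 1) (hB1 : ∀ v, fB1 v ∈ Icc (0:ℝ) 1)
    (hA10 : fA1 0 = 1) (hB10 : fB1 0 = 1) (x : V) :
    brSup K br fA fB x ≤ supDecomp (supDecomp (brSup K br fA0 fB0) (brSup K br fA1 fB1))
      (supDecomp (brSup K br fA0 fB1) (brSup K br fA1 fB0)) x := by
  have hE : ∀ v, supDecomp (brSup K br fA0 fB0) (brSup K br fA1 fB1) v ∈ Icc (0:ℝ) 1 :=
    fun v => sd_mem_Icc (brSup_mem_Icc K hA0 hB0) (brSup_mem_Icc K hA1 hB1) v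
  have hO : ∀ v, supDecomp (brSup K br fA0 fB1) (brSup K br fA1 fB0) v ∈ Icc (0:ℝ) 1 :=
    fun v => sd_mem_Icc (brSup_mem_Icc K hA0 hB1) (brSup_mem_Icc K hA1 hB0) v
  refine csSup_le (Set.insert_nonempty _ _) ?_
  rintro t ht
  rcases Set.mem_insert_iff.mp ht with rfl | ⟨n, c, a, b, hx, rfl⟩
  · exact (sd_mem_Icc hE hO x).1
  show (Finset.univ.inf' Finset.univ_nonempty fun i => min (fA (a i)) (fB (b i))) ≤ _
  refine le_of_forall_pos_le_add fun ε hε => ?_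
  choose u w hau hamin using fun i => exists_sd_decomp hfA hA0 hA10 (a i) hε
  choose s z hbs hbmin using fun i => exists_sd_decomp hfB hB0 hB10 (b i) hε
  set m := Finset.univ.inf' Finset.univ_nonempty fun i => min (fA (a i)) (fB (b i)) with hm
  have hma : ∀ i, m ≤ fA (a i) := fun i =>
    le_trans (Finset.inf'_le (fun i => min (fA (a i)) (fB (b i))) (Finset.mem_univ i))
      (min_le_left _ _)
  have hmb : ∀ i, m ≤ fB (b i) := fun i =>
    le_trans (Finset.inf'_le (fun i => min (fA (a i)) (fB (b i))) (Finset.mem_univ i))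
      (min_le_right _ _)
  have hsplit : x = ((∑ i, c i • br (u i) (s i)) + ∑ i, c i • br (w i) (z i)) +
      ((∑ i, c i • br (u i) (z i)) + ∑ i, c i • br (w i) (s i)) := by
    rw [hx, ← Finset.sum_add_distrib, ← Finset.sum_add_distrib, ← Finset.sum_add_distrib]
    refine Finset.sum_congr rfl fun i _ => ?_
    rw [hau i, hbs i, hal, har, har]
    simp only [smul_add]
    abel
  have e1 : m - ε ≤ brSup K br fA0 fB0 (∑ i, c i • br (u i) (s i)) := by
    have hmem := le_csSup (repMin_bddAbove K hA0 hB0 (∑ i, c i • br (u i) (s i)))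
      (Set.mem_insert_of_mem _ (⟨n, c, u, s, rfl, rfl⟩ :
        (Finset.univ.inf' Finset.univ_nonempty fun i => min (fA0 (u i)) (fB0 (s i))) ∈
          bracketRepMin K br fA0 fB0 (∑ i, c i • br (u i) (s i))))
    refine le_trans (Finset.le_inf' Finset.univ_nonempty
      (fun i => min (fA0 (u i)) (fB0 (s i))) fun i _ => le_min ?_ ?_) hmem
    · have h5 := hamin i
      have h6 := hma i
      have h7 := min_le_left (fA0 (u i)) (fA1 (w i))
      linarith
    · have h5 := hbmin i
      have h6 := hmb i
      have h7 := min_le_left (fB0 (s i)) (fB1 (z i))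
      linarith
  have e2 : m - ε ≤ brSup K br fA1 fB1 (∑ i, c i • br (w i) (z i)) := by
    have hmem := le_csSup (repMin_bddAbove K hA1 hB1 (∑ i, c i • br (w i) (z i)))
      (Set.mem_insert_of_mem _ (⟨n, c, w, z, rfl, rfl⟩ :
        (Finset.univ.inf' Finset.univ_nonempty fun i => min (fA1 (w i)) (fB1 (z i))) ∈
          bracketRepMin K br fA1 fB1 (∑ i, c i • br (w i) (z i))))
    refine le_trans (Finset.le_inf' Finset.univ_nonempty
      (fun i => min (fA1 (w i)) (fB1 (z i))) fun i _ => le_min ?_ ?_) hmem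
    · have h5 := hamin i
      have h6 := hma i
      have h7 := min_le_right (fA0 (u i)) (fA1 (w i))
      linarith
    · have h5 := hbmin i
      have h6 := hmb i
      have h7 := min_le_right (fB0 (s i)) (fB1 (z i))
      linarith
  have o1 : m - ε ≤ brSup K br fA0 fB1 (∑ i, c i • br (u i) (z i)) := by
    have hmem := le_csSup (repMin_bddAbove K hA0 hB1 (∑ i, c i • br (u i) (z i)))
      (Set.mem_insert_of_mem _ (⟨n, c, u, z, rfl, rfl⟩ :
        (Finset.univ.inf' Finset.univ_nonempty fun i => min (fA0 (u i)) (fB1 (z i))) ∈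
          bracketRepMin K br fA0 fB1 (∑ i, c i • br (u i) (z i))))
    refine le_trans (Finset.le_inf' Finset.univ_nonempty
      (fun i => min (fA0 (u i)) (fB1 (z i))) fun i _ => le_min ?_ ?_) hmem
    · have h5 := hamin i
      have h6 := hma i
      have h7 := min_le_left (fA0 (u i)) (fA1 (w i))
      linarith
    · have h5 := hbmin i
      have h6 := hmb i
      have h7 := min_le_right (fB0 (s i)) (fB1 (z i))
      linarith
  have o2 : m - ε ≤ brSup K br fA1 fB0 (∑ i, c i • br (w i) (s i)) := by
    have hmem := le_csSup (repMin_bddAbove K hA1 hB0 (∑ i, c i • br (w i) (s i)))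
      (Set.mem_insert_of_mem _ (⟨n, c, w, s, rfl, rfl⟩ :
        (Finset.univ.inf' Finset.univ_nonempty fun i => min (fA1 (w i)) (fB0 (s i))) ∈
          bracketRepMin K br fA1 fB0 (∑ i, c i • br (w i) (s i))))
    refine le_trans (Finset.le_inf' Finset.univ_nonempty
      (fun i => min (fA1 (w i)) (fB0 (s i))) fun i _ => le_min ?_ ?_) hmem
    · have h5 := hamin i
      have h6 := hma i
      have h7 := min_le_right (fA0 (u i)) (fA1 (w i))
      linarith
    · have h5 := hbmin i
      have h6 := hmb i
      have h7 := min_le_left (fB0 (s i)) (fB1 (z i))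
      linarith
  have hEp : m - ε ≤ supDecomp (brSup K br fA0 fB0) (brSup K br fA1 fB1)
      ((∑ i, c i • br (u i) (s i)) + ∑ i, c i • br (w i) (z i)) :=
    le_trans (le_min e1 e2) (le_csSup
      (sd_bddAbove (brSup_mem_Icc K hA0 hB0) (brSup_mem_Icc K hA1 hB1) _)
      (Set.mem_insert_of_mem _ ⟨_, _, rfl, rfl⟩))
  have hOq : m - ε ≤ supDecomp (brSup K br fA0 fB1) (brSup K br fA1 fB0)
      ((∑ i, c i • br (u i) (z i)) + ∑ i, c i • br (w i) (s i)) :=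
    le_trans (le_min o1 o2) (le_csSup
      (sd_bddAbove (brSup_mem_Icc K hA0 hB1) (brSup_mem_Icc K hA1 hB0) _)
      (Set.mem_insert_of_mem _ ⟨_, _, rfl, rfl⟩))
  have hfin : m - ε ≤ supDecomp (supDecomp (brSup K br fA0 fB0) (brSup K br fA1 fB1))
      (supDecomp (brSup K br fA0 fB1) (brSup K br fA1 fB0)) x :=
    le_trans (le_min hEp hOq) (le_csSup (sd_bddAbove hE hO x)
      (Set.mem_insert_of_mem _ ⟨_, _, hsplit, rfl⟩))
  linarith

theorem id_le_brInf
    (hal : ∀ x y z : V, br (x + y) z = br x z + br y z)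
    (har : ∀ x y z : V, br x (y + z) = br x y + br x z)
    {fA fA0 fA1 fB fB0 fB1 : V → ℝ}
    (hfA : ∀ v, fA v = infDecomp fA0 fA1 v) (hfB : ∀ v, fB v = infDecomp fB0 fB1 v)
    (hA0 : ∀ v, fA0 v ∈ Icc (0:ℝ) 1) (hA1 : ∀ v, fA1 v ∈ Icc (0:ℝ) 1)
    (hB0 : ∀ v, fB0 v ∈ Icc (0:ℝ) 1) (hB1 : ∀ v, fB1 v ∈ Icc (0:ℝ) 1)
    (hA10 : fA1 0 = 0) (hB10 : fB1 0 = 0) (x : V) :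
    infDecomp (infDecomp (brInf K br fA0 fB0) (brInf K br fA1 fB1))
      (infDecomp (brInf K br fA0 fB1) (brInf K br fA1 fB0)) x ≤ brInf K br fA fB x := by
  have hE : ∀ v, infDecomp (brInf K br fA0 fB0) (brInf K br fA1 fB1) v ∈ Icc (0:ℝ) 1 :=
    fun v => id_mem_Icc (brInf_mem_Icc K hA0 hB0) (brInf_mem_Icc K hA1 hB1) v
  have hO : ∀ v, infDecomp (brInf K br fA0 fB1) (brInf K br fA1 fB0) v ∈ Icc (0:ℝ) 1 :=
    fun v => id_mem_Icc (brInf_mem_Icc K hA0 hB1) (brInf_mem_Icc K hA1 hB0) v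
  refine le_csInf (Set.insert_nonempty _ _) ?_
  rintro t ht
  rcases Set.mem_insert_iff.mp ht with rfl | ⟨n, c, a, b, hx, rfl⟩
  · exact (id_mem_Icc hE hO x).2
  show _ ≤ (Finset.univ.sup' Finset.univ_nonempty fun i => max (fA (a i)) (fB (b i)))
  refine le_of_forall_pos_le_add fun ε hε => ?_
  choose u w hau hamin using fun i => exists_id_decomp hfA hA0 hA10 (a i) hε
  choose s z hbs hbmin using fun i => exists_id_decomp hfB hB0 hB10 (b i) hε
  set m := Finset.univ.sup' Finset.univ_nonempty fun i => max (fA (a i)) (fB (b i)) with hm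
  have hma : ∀ i, fA (a i) ≤ m := fun i =>
    le_trans (le_max_left _ _)
      (Finset.le_sup' (fun i => max (fA (a i)) (fB (b i))) (Finset.mem_univ i))
  have hmb : ∀ i, fB (b i) ≤ m := fun i =>
    le_trans (le_max_right _ _)
      (Finset.le_sup' (fun i => max (fA (a i)) (fB (b i))) (Finset.mem_univ i))
  have hsplit : x = ((∑ i, c i • br (u i) (s i)) + ∑ i, c i • br (w i) (z i)) +
      ((∑ i, c i • br (u i) (z i)) + ∑ i, c i • br (w i) (s i)) := by
    rw [hx, ← Finset.sum_add_distrib, ← Finset.sum_add_distrib, ← Finset.sum_add_distrib]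
    refine Finset.sum_congr rfl fun i _ => ?_
    rw [hau i, hbs i, hal, har, har]
    simp only [smul_add]
    abel
  have e1 : brInf K br fA0 fB0 (∑ i, c i • br (u i) (s i)) ≤ m + ε := by
    have hmem := csInf_le (repMax_bddBelow K hA0 hB0 (∑ i, c i • br (u i) (s i)))
      (Set.mem_insert_of_mem _ (⟨n, c, u, s, rfl, rfl⟩ :
        (Finset.univ.sup' Finset.univ_nonempty fun i => max (fA0 (u i)) (fB0 (s i))) ∈
          bracketRepMax K br fA0 fB0 (∑ i, c i • br (u i) (s i))))
    refine le_trans hmem (Finset.sup'_le Finset.univ_nonempty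
      (fun i => max (fA0 (u i)) (fB0 (s i))) fun i _ => max_le ?_ ?_)
    · have h5 := hamin i
      have h6 := hma i
      have h7 := le_max_left (fA0 (u i)) (fA1 (w i))
      linarith
    · have h5 := hbmin i
      have h6 := hmb i
      have h7 := le_max_left (fB0 (s i)) (fB1 (z i))
      linarith
  have e2 : brInf K br fA1 fB1 (∑ i, c i • br (w i) (z i)) ≤ m + ε := by
    have hmem := csInf_le (repMax_bddBelow K hA1 hB1 (∑ i, c i • br (w i) (z i)))
      (Set.mem_insert_of_mem _ (⟨n, c, w, z, rfl, rfl⟩ :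
        (Finset.univ.sup' Finset.univ_nonempty fun i => max (fA1 (w i)) (fB1 (z i))) ∈
          bracketRepMax K br fA1 fB1 (∑ i, c i • br (w i) (z i))))
    refine le_trans hmem (Finset.sup'_le Finset.univ_nonempty
      (fun i => max (fA1 (w i)) (fB1 (z i))) fun i _ => max_le ?_ ?_)
    · have h5 := hamin i
      have h6 := hma i
      have h7 := le_max_right (fA0 (u i)) (fA1 (w i))
      linarith
    · have h5 := hbmin i
      have h6 := hmb i
      have h7 := le_max_right (fB0 (s i)) (fB1 (z i))
      linarith
  have o1 : brInf K br fA0 fB1 (∑ i, c i • br (u i) (z i)) ≤ m + ε := by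
    have hmem := csInf_le (repMax_bddBelow K hA0 hB1 (∑ i, c i • br (u i) (z i)))
      (Set.mem_insert_of_mem _ (⟨n, c, u, z, rfl, rfl⟩ :
        (Finset.univ.sup' Finset.univ_nonempty fun i => max (fA0 (u i)) (fB1 (z i))) ∈
          bracketRepMax K br fA0 fB1 (∑ i, c i • br (u i) (z i))))
    refine le_trans hmem (Finset.sup'_le Finset.univ_nonempty
      (fun i => max (fA0 (u i)) (fB1 (z i))) fun i _ => max_le ?_ ?_)
    · have h5 := hamin i
      have h6 := hma i
      have h7 := le_max_left (fA0 (u i)) (fA1 (w i))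
      linarith
    · have h5 := hbmin i
      have h6 := hmb i
      have h7 := le_max_right (fB0 (s i)) (fB1 (z i))
      linarith
  have o2 : brInf K br fA1 fB0 (∑ i, c i • br (w i) (s i)) ≤ m + ε := by
    have hmem := csInf_le (repMax_bddBelow K hA1 hB0 (∑ i, c i • br (w i) (s i)))
      (Set.mem_insert_of_mem _ (⟨n, c, w, s, rfl, rfl⟩ :
        (Finset.univ.sup' Finset.univ_nonempty fun i => max (fA1 (w i)) (fB0 (s i))) ∈
          bracketRepMax K br fA1 fB0 (∑ i, c i • br (w i) (s i))))
    refine le_trans hmem (Finset.sup'_le Finset.univ_nonempty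
      (fun i => max (fA1 (w i)) (fB0 (s i))) fun i _ => max_le ?_ ?_)
    · have h5 := hamin i
      have h6 := hma i
      have h7 := le_max_right (fA0 (u i)) (fA1 (w i))
      linarith
    · have h5 := hbmin i
      have h6 := hmb i
      have h7 := le_max_left (fB0 (s i)) (fB1 (z i))
      linarith
  have hEp : infDecomp (brInf K br fA0 fB0) (brInf K br fA1 fB1)
      ((∑ i, c i • br (u i) (s i)) + ∑ i, c i • br (w i) (z i)) ≤ m + ε :=
    le_trans (csInf_le (id_bddBelow (brInf_mem_Icc K hA0 hB0) (brInf_mem_Icc K hA1 hB1) _)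
      (Set.mem_insert_of_mem _ ⟨_, _, rfl, rfl⟩)) (max_le e1 e2)
  have hOq : infDecomp (brInf K br fA0 fB1) (brInf K br fA1 fB0)
      ((∑ i, c i • br (u i) (z i)) + ∑ i, c i • br (w i) (s i)) ≤ m + ε :=
    le_trans (csInf_le (id_bddBelow (brInf_mem_Icc K hA0 hB1) (brInf_mem_Icc K hA1 hB0) _)
      (Set.mem_insert_of_mem _ ⟨_, _, rfl, rfl⟩)) (max_le o1 o2)
  exact le_trans (csInf_le (id_bddBelow hE hO x)
    (Set.mem_insert_of_mem _ ⟨_, _, hsplit, rfl⟩)) (max_le hEp hOq)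

end Aux5
section Aux6

open Set

variable (K : Type*) [Field K] {V : Type*} [AddCommGroup V] [Module K V] {br : V → V → V}

theorem bracket_isSubspace'
    (hal : ∀ x y z : V, br (x + y) z = br x z + br y z)
    {A B : CIFSet V} (hA : A.IsSubspace K) (hB : B.IsSubspace K) :
    (CIFSet.bracket K br A B).IsSubspace K := by
  have hAr : ∀ v, A.r v ∈ Icc (0:ℝ) 1 := fun v => (hA.isCIF v).1
  have hAw : ∀ v, A.w v ∈ Icc (0:ℝ) 1 := fun v => (hA.isCIF v).2.1
  have hArh : ∀ v, A.rhat v ∈ Icc (0:ℝ) 1 := fun v => (hA.isCIF v).2.2.1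
  have hAwh : ∀ v, A.what v ∈ Icc (0:ℝ) 1 := fun v => (hA.isCIF v).2.2.2.1
  have hAs : ∀ v, A.r v + A.rhat v ≤ 1 := fun v => (hA.isCIF v).2.2.2.2
  have hBr : ∀ v, B.r v ∈ Icc (0:ℝ) 1 := fun v => (hB.isCIF v).1
  have hBw : ∀ v, B.w v ∈ Icc (0:ℝ) 1 := fun v => (hB.isCIF v).2.1
  have hBrh : ∀ v, B.rhat v ∈ Icc (0:ℝ) 1 := fun v => (hB.isCIF v).2.2.1
  have hBwh : ∀ v, B.what v ∈ Icc (0:ℝ) 1 := fun v => (hB.isCIF v).2.2.2.1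
  have hBs : ∀ v, B.r v + B.rhat v ≤ 1 := fun v => (hB.isCIF v).2.2.2.2
  exact {
    isCIF := fun x => ⟨brSup_mem_Icc K hAr hBr x, brSup_mem_Icc K hAw hBw x,
      brInf_mem_Icc K hArh hBrh x, brInf_mem_Icc K hAwh hBwh x,
      brSup_add_brInf_le_one K hArh hBrh hAs hBs x⟩
    add_r := brSup_add K hAr hBr
    add_w := brSup_add K hAw hBw
    add_rhat := brInf_add K hArh hBrh
    add_what := brInf_add K hAwh hBwh
    smul_r := fun c x => brSup_smul K hAr hBr c x
    smul_w := fun c x => brSup_smul K hAw hBw c x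
    smul_rhat := fun c x => brInf_smul K hArh hBrh c x
    smul_what := fun c x => brInf_smul K hAwh hBwh c x
    r_zero := brSup_zero K hal hAr hBr hA.r_zero hB.r_zero
    w_zero := brSup_zero K hal hAw hBw hA.w_zero hB.w_zero
    rhat_zero := brInf_zero K hal hArh hBrh hA.rhat_zero hB.rhat_zero
    what_zero := brInf_zero K hal hAwh hBwh hA.what_zero hB.what_zero }

theorem sum_isSubspace' {A B : CIFSet V} (hA : A.IsSubspace K) (hB : B.IsSubspace K) :
    (A.sum B).IsSubspace K := by
  have hAr : ∀ v, A.r v ∈ Icc (0:ℝ) 1 := fun v => (hA.isCIF v).1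
  have hAw : ∀ v, A.w v ∈ Icc (0:ℝ) 1 := fun v => (hA.isCIF v).2.1
  have hArh : ∀ v, A.rhat v ∈ Icc (0:ℝ) 1 := fun v => (hA.isCIF v).2.2.1
  have hAwh : ∀ v, A.what v ∈ Icc (0:ℝ) 1 := fun v => (hA.isCIF v).2.2.2.1
  have hAs : ∀ v, A.r v + A.rhat v ≤ 1 := fun v => (hA.isCIF v).2.2.2.2
  have hBr : ∀ v, B.r v ∈ Icc (0:ℝ) 1 := fun v => (hB.isCIF v).1
  have hBw : ∀ v, B.w v ∈ Icc (0:ℝ) 1 := fun v => (hB.isCIF v).2.1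
  have hBrh : ∀ v, B.rhat v ∈ Icc (0:ℝ) 1 := fun v => (hB.isCIF v).2.2.1
  have hBwh : ∀ v, B.what v ∈ Icc (0:ℝ) 1 := fun v => (hB.isCIF v).2.2.2.1
  have hBs : ∀ v, B.r v + B.rhat v ≤ 1 := fun v => (hB.isCIF v).2.2.2.2
  exact {
    isCIF := fun x => ⟨sd_mem_Icc hAr hBr x, sd_mem_Icc hAw hBw x,
      id_mem_Icc hArh hBrh x, id_mem_Icc hAwh hBwh x,
      sd_add_id_le_one hArh hBrh hAs hBs x⟩
    add_r := sd_add hAr hBr hA.add_r hB.add_r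
    add_w := sd_add hAw hBw hA.add_w hB.add_w
    add_rhat := id_add hArh hBrh hA.add_rhat hB.add_rhat
    add_what := id_add hAwh hBwh hA.add_what hB.add_what
    smul_r := fun c x => sd_smul hAr hBr hA.smul_r hB.smul_r c x
    smul_w := fun c x => sd_smul hAw hBw hA.smul_w hB.smul_w c x
    smul_rhat := fun c x => id_smul hArh hBrh hA.smul_rhat hB.smul_rhat c x
    smul_what := fun c x => id_smul hAwh hBwh hA.smul_what hB.smul_what c x
    r_zero := sd_zero hAr hBr hA.r_zero hB.r_zero
    w_zero := sd_zero hAw hBw hA.w_zero hB.w_zero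
    rhat_zero := id_zero hArh hBrh hA.rhat_zero hB.rhat_zero
    what_zero := id_zero hAwh hBwh hA.what_zero hB.what_zero }

end Aux6
theorem bracket_isGraded {K : Type*} [Field K] {V : Type*} [AddCommGroup V] [Module K V]
    (V0 V1 : Submodule K V) (br : V → V → V) (hLS : IsLieSuper K V0 V1 br)
    (A A₀ A₁ B B₀ B₁ : CIFSet V)
    (hA : IsGradedSubspace K V0 V1 A A₀ A₁) (hB : IsGradedSubspace K V0 V1 B B₀ B₁) :
    IsGradedSubspace K V0 V1 (CIFSet.bracket K br A B)
      ((CIFSet.bracket K br A₀ B₀).sum (CIFSet.bracket K br A₁ B₁))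
      ((CIFSet.bracket K br A₀ B₁).sum (CIFSet.bracket K br A₁ B₀)) := by
  have hal := hLS.add_left
  have har := hLS.add_right
  have hg00 : ∀ a ∈ V0, ∀ b ∈ V0, br a b ∈ V0 := fun a ha b hb =>
    hLS.grade false false a ha b hb
  have hg11 : ∀ a ∈ V1, ∀ b ∈ V1, br a b ∈ V0 := fun a ha b hb =>
    hLS.grade true true a ha b hb
  have hg01 : ∀ a ∈ V0, ∀ b ∈ V1, br a b ∈ V1 := fun a ha b hb =>
    hLS.grade false true a ha b hb
  have hg10 : ∀ a ∈ V1, ∀ b ∈ V0, br a b ∈ V1 := fun a ha b hb =>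
    hLS.grade true false a ha b hb
  -- bounds for all twelve degree functions
  have hAr : ∀ v, A.r v ∈ Set.Icc (0:ℝ) 1 := fun v => (hA.subA.isCIF v).1
  have hAw : ∀ v, A.w v ∈ Set.Icc (0:ℝ) 1 := fun v => (hA.subA.isCIF v).2.1
  have hArh : ∀ v, A.rhat v ∈ Set.Icc (0:ℝ) 1 := fun v => (hA.subA.isCIF v).2.2.1
  have hAwh : ∀ v, A.what v ∈ Set.Icc (0:ℝ) 1 := fun v => (hA.subA.isCIF v).2.2.2.1
  have hBr : ∀ v, B.r v ∈ Set.Icc (0:ℝ) 1 := fun v => (hB.subA.isCIF v).1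
  have hBw : ∀ v, B.w v ∈ Set.Icc (0:ℝ) 1 := fun v => (hB.subA.isCIF v).2.1
  have hBrh : ∀ v, B.rhat v ∈ Set.Icc (0:ℝ) 1 := fun v => (hB.subA.isCIF v).2.2.1
  have hBwh : ∀ v, B.what v ∈ Set.Icc (0:ℝ) 1 := fun v => (hB.subA.isCIF v).2.2.2.1
  have hA0r : ∀ v, A₀.r v ∈ Set.Icc (0:ℝ) 1 := fun v => (hA.sub0.isCIF v).1
  have hA0w : ∀ v, A₀.w v ∈ Set.Icc (0:ℝ) 1 := fun v => (hA.sub0.isCIF v).2.1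
  have hA0rh : ∀ v, A₀.rhat v ∈ Set.Icc (0:ℝ) 1 := fun v => (hA.sub0.isCIF v).2.2.1
  have hA0wh : ∀ v, A₀.what v ∈ Set.Icc (0:ℝ) 1 := fun v => (hA.sub0.isCIF v).2.2.2.1
  have hA1r : ∀ v, A₁.r v ∈ Set.Icc (0:ℝ) 1 := fun v => (hA.sub1.isCIF v).1
  have hA1w : ∀ v, A₁.w v ∈ Set.Icc (0:ℝ) 1 := fun v => (hA.sub1.isCIF v).2.1
  have hA1rh : ∀ v, A₁.rhat v ∈ Set.Icc (0:ℝ) 1 := fun v => (hA.sub1.isCIF v).2.2.1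
  have hA1wh : ∀ v, A₁.what v ∈ Set.Icc (0:ℝ) 1 := fun v => (hA.sub1.isCIF v).2.2.2.1
  have hB0r : ∀ v, B₀.r v ∈ Set.Icc (0:ℝ) 1 := fun v => (hB.sub0.isCIF v).1
  have hB0w : ∀ v, B₀.w v ∈ Set.Icc (0:ℝ) 1 := fun v => (hB.sub0.isCIF v).2.1
  have hB0rh : ∀ v, B₀.rhat v ∈ Set.Icc (0:ℝ) 1 := fun v => (hB.sub0.isCIF v).2.2.1
  have hB0wh : ∀ v, B₀.what v ∈ Set.Icc (0:ℝ) 1 := fun v => (hB.sub0.isCIF v).2.2.2.1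
  have hB1r : ∀ v, B₁.r v ∈ Set.Icc (0:ℝ) 1 := fun v => (hB.sub1.isCIF v).1
  have hB1w : ∀ v, B₁.w v ∈ Set.Icc (0:ℝ) 1 := fun v => (hB.sub1.isCIF v).2.1
  have hB1rh : ∀ v, B₁.rhat v ∈ Set.Icc (0:ℝ) 1 := fun v => (hB.sub1.isCIF v).2.2.1
  have hB1wh : ∀ v, B₁.what v ∈ Set.Icc (0:ℝ) 1 := fun v => (hB.sub1.isCIF v).2.2.2.1
  -- decompositions of the degree functions of A and B
  have hfAr : ∀ v, A.r v = supDecomp A₀.r A₁.r v := fun v => by rw [hA.eq]; rfl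
  have hfAw : ∀ v, A.w v = supDecomp A₀.w A₁.w v := fun v => by rw [hA.eq]; rfl
  have hfArh : ∀ v, A.rhat v = infDecomp A₀.rhat A₁.rhat v := fun v => by rw [hA.eq]; rfl
  have hfAwh : ∀ v, A.what v = infDecomp A₀.what A₁.what v := fun v => by rw [hA.eq]; rfl
  have hfBr : ∀ v, B.r v = supDecomp B₀.r B₁.r v := fun v => by rw [hB.eq]; rfl
  have hfBw : ∀ v, B.w v = supDecomp B₀.w B₁.w v := fun v => by rw [hB.eq]; rfl
  have hfBrh : ∀ v, B.rhat v = infDecomp B₀.rhat B₁.rhat v := fun v => by rw [hB.eq]; rfl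
  have hfBwh : ∀ v, B.what v = infDecomp B₀.what B₁.what v := fun v => by rw [hB.eq]; rfl
  -- componentwise comparison with the graded parts
  have h0Ar : ∀ v, A₀.r v ≤ A.r v := fun v => by
    rw [hfAr v]; exact le_sd_left hA0r hA1r hA.sub1.r_zero v
  have h1Ar : ∀ v, A₁.r v ≤ A.r v := fun v => by
    rw [hfAr v]; exact le_sd_right hA0r hA1r hA.sub0.r_zero v
  have h0Aw : ∀ v, A₀.w v ≤ A.w v := fun v => by
    rw [hfAw v]; exact le_sd_left hA0w hA1w hA.sub1.w_zero v
  have h1Aw : ∀ v, A₁.w v ≤ A.w v := fun v => by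
    rw [hfAw v]; exact le_sd_right hA0w hA1w hA.sub0.w_zero v
  have h0Arh : ∀ v, A.rhat v ≤ A₀.rhat v := fun v => by
    rw [hfArh v]; exact id_le_left hA0rh hA1rh hA.sub1.rhat_zero v
  have h1Arh : ∀ v, A.rhat v ≤ A₁.rhat v := fun v => by
    rw [hfArh v]; exact id_le_right hA0rh hA1rh hA.sub0.rhat_zero v
  have h0Awh : ∀ v, A.what v ≤ A₀.what v := fun v => by
    rw [hfAwh v]; exact id_le_left hA0wh hA1wh hA.sub1.what_zero v
  have h1Awh : ∀ v, A.what v ≤ A₁.what v := fun v => by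
    rw [hfAwh v]; exact id_le_right hA0wh hA1wh hA.sub0.what_zero v
  have h0Br : ∀ v, B₀.r v ≤ B.r v := fun v => by
    rw [hfBr v]; exact le_sd_left hB0r hB1r hB.sub1.r_zero v
  have h1Br : ∀ v, B₁.r v ≤ B.r v := fun v => by
    rw [hfBr v]; exact le_sd_right hB0r hB1r hB.sub0.r_zero v
  have h0Bw : ∀ v, B₀.w v ≤ B.w v := fun v => by
    rw [hfBw v]; exact le_sd_left hB0w hB1w hB.sub1.w_zero v
  have h1Bw : ∀ v, B₁.w v ≤ B.w v := fun v => by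
    rw [hfBw v]; exact le_sd_right hB0w hB1w hB.sub0.w_zero v
  have h0Brh : ∀ v, B.rhat v ≤ B₀.rhat v := fun v => by
    rw [hfBrh v]; exact id_le_left hB0rh hB1rh hB.sub1.rhat_zero v
  have h1Brh : ∀ v, B.rhat v ≤ B₁.rhat v := fun v => by
    rw [hfBrh v]; exact id_le_right hB0rh hB1rh hB.sub0.rhat_zero v
  have h0Bwh : ∀ v, B.what v ≤ B₀.what v := fun v => by
    rw [hfBwh v]; exact id_le_left hB0wh hB1wh hB.sub1.what_zero v
  have h1Bwh : ∀ v, B.what v ≤ B₁.what v := fun v => by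
    rw [hfBwh v]; exact id_le_right hB0wh hB1wh hB.sub0.what_zero v
  refine ⟨bracket_isSubspace' K hal hA.subA hB.subA,
    sum_isSubspace' K (bracket_isSubspace' K hal hA.sub0 hB.sub0)
      (bracket_isSubspace' K hal hA.sub1 hB.sub1),
    sum_isSubspace' K (bracket_isSubspace' K hal hA.sub0 hB.sub1)
      (bracket_isSubspace' K hal hA.sub1 hB.sub0), ?_, ?_, ?_⟩
  · -- supp0
    intro x hx
    refine ⟨?_, ?_, ?_, ?_⟩
    · exact sd_supp (W := V0)
        (fun v hv => brSup_supp K hg00 (fun u hu => (hA.supp0 u hu).1)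
          (fun u hu => (hB.supp0 u hu).1) hv)
        (fun v hv => brSup_supp K hg11 (fun u hu => (hA.supp1 u hu).1)
          (fun u hu => (hB.supp1 u hu).1) hv) hx
    · exact sd_supp (W := V0)
        (fun v hv => brSup_supp K hg00 (fun u hu => (hA.supp0 u hu).2.1)
          (fun u hu => (hB.supp0 u hu).2.1) hv)
        (fun v hv => brSup_supp K hg11 (fun u hu => (hA.supp1 u hu).2.1)
          (fun u hu => (hB.supp1 u hu).2.1) hv) hx
    · exact id_supp (W := V0)
        (fun v hv => brInf_supp K hg00 (fun u hu => (hA.supp0 u hu).2.2.1)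
          (fun u hu => (hB.supp0 u hu).2.2.1) hv)
        (fun v hv => brInf_supp K hg11 (fun u hu => (hA.supp1 u hu).2.2.1)
          (fun u hu => (hB.supp1 u hu).2.2.1) hv) hx
    · exact id_supp (W := V0)
        (fun v hv => brInf_supp K hg00 (fun u hu => (hA.supp0 u hu).2.2.2)
          (fun u hu => (hB.supp0 u hu).2.2.2) hv)
        (fun v hv => brInf_supp K hg11 (fun u hu => (hA.supp1 u hu).2.2.2)
          (fun u hu => (hB.supp1 u hu).2.2.2) hv) hx
  · -- supp1
    intro x hx
    refine ⟨?_, ?_, ?_, ?_⟩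
    · exact sd_supp (W := V1)
        (fun v hv => brSup_supp K hg01 (fun u hu => (hA.supp0 u hu).1)
          (fun u hu => (hB.supp1 u hu).1) hv)
        (fun v hv => brSup_supp K hg10 (fun u hu => (hA.supp1 u hu).1)
          (fun u hu => (hB.supp0 u hu).1) hv) hx
    · exact sd_supp (W := V1)
        (fun v hv => brSup_supp K hg01 (fun u hu => (hA.supp0 u hu).2.1)
          (fun u hu => (hB.supp1 u hu).2.1) hv)
        (fun v hv => brSup_supp K hg10 (fun u hu => (hA.supp1 u hu).2.1)
          (fun u hu => (hB.supp0 u hu).2.1) hv) hx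
    · exact id_supp (W := V1)
        (fun v hv => brInf_supp K hg01 (fun u hu => (hA.supp0 u hu).2.2.1)
          (fun u hu => (hB.supp1 u hu).2.2.1) hv)
        (fun v hv => brInf_supp K hg10 (fun u hu => (hA.supp1 u hu).2.2.1)
          (fun u hu => (hB.supp0 u hu).2.2.1) hv) hx
    · exact id_supp (W := V1)
        (fun v hv => brInf_supp K hg01 (fun u hu => (hA.supp0 u hu).2.2.2)
          (fun u hu => (hB.supp1 u hu).2.2.2) hv)
        (fun v hv => brInf_supp K hg10 (fun u hu => (hA.supp1 u hu).2.2.2)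
          (fun u hu => (hB.supp0 u hu).2.2.2) hv) hx
  · -- eq
    refine CIFSet.ext' (funext fun x => ?_) (funext fun x => ?_)
      (funext fun x => ?_) (funext fun x => ?_)
    · exact le_antisymm
        (brSup_le_sd K hal har hfAr hfBr hA0r hA1r hB0r hB1r
          hA.sub1.r_zero hB.sub1.r_zero x)
        (sd_le_brSup K hAr hBr h0Ar h1Ar h0Br h1Br x)
    · exact le_antisymm
        (brSup_le_sd K hal har hfAw hfBw hA0w hA1w hB0w hB1w
          hA.sub1.w_zero hB.sub1.w_zero x)
        (sd_le_brSup K hAw hBw h0Aw h1Aw h0Bw h1Bw x)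
    · exact le_antisymm
        (brInf_le_id K hArh hBrh h0Arh h1Arh h0Brh h1Brh x)
        (id_le_brInf K hal har hfArh hfBrh hA0rh hA1rh hB0rh hB1rh
          hA.sub1.rhat_zero hB.sub1.rhat_zero x)
    · exact le_antisymm
        (brInf_le_id K hAwh hBwh h0Awh h1Awh h0Bwh h1Bwh x)
        (id_le_brInf K hal har hfAwh hfBwh hA0wh hA1wh hB0wh hB1wh
          hA.sub1.what_zero hB.sub1.what_zero x)

end CIF
end

section
/- Let A and B be CIF ideals of V. Then the bracket product [A, B] is a CIF ideal of V; in particular λ_{[A,B]}([x,y]) ≥ λ_{[A,B]}(x) ∨ λ_{[A,B]}(y) and ρ_{[A,B]}([x,y]) ≤ ρ_{[A,B]}(x) ∧ ρ_{[A,B]}(y) for all x, y ∈ V. -/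
namespace CIF

/-! ### Auxiliary machinery for `bracket_isIdeal` -/

section BracketAux

/-- Sign appearing in the super Jacobi identity / skew-symmetry. -/
def sgnK (K : Type*) [Field K] (a b : Bool) : K :=
  (-1 : K) ^ ((bif a then 1 else 0) * (bif b then 1 else 0) : ℕ)

lemma sgnK_ne_zero (K : Type*) [Field K] (a b : Bool) : sgnK K a b ≠ 0 :=
  pow_ne_zero _ (by norm_num)

/-- The value of the bracket product before taking `sSup`. -/
noncomputable def Fb (K : Type*) [Field K] {V : Type*} [AddCommGroup V] [Module K V]
    (br : V → V → V) (f g : V → ℝ) (x : V) : ℝ :=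
  sSup (insert 0 (bracketRepMin K br f g x))

/-- Elements admitting a bracket representation of value `≥ t` (together with `0`)
form a submodule. -/
def Mset (K : Type*) [Field K] {V : Type*} [AddCommGroup V] [Module K V]
    (br : V → V → V) (f g : V → ℝ) (t : ℝ) : Submodule K V where
  carrier := {z | z = 0 ∨ ∃ (n : ℕ) (c : Fin (n + 1) → K) (a b : Fin (n + 1) → V),
    z = ∑ i, c i • br (a i) (b i) ∧
    t ≤ Finset.univ.inf' Finset.univ_nonempty fun i => min (f (a i)) (g (b i))}
  zero_mem' := Or.inl rfl
  add_mem' := by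
    rintro x y (rfl | ⟨n1, c1, a1, b1, rfl, h1⟩) hy
    · simpa using hy
    rcases hy with rfl | ⟨n2, c2, a2, b2, rfl, h2⟩
    · exact Or.inr ⟨n1, c1, a1, b1, by simp, h1⟩
    refine Or.inr ⟨n1 + 1 + n2, Fin.append (m := n1+1) (n := n2+1) c1 c2,
      Fin.append (m := n1+1) (n := n2+1) a1 a2, Fin.append (m := n1+1) (n := n2+1) b1 b2, ?_, ?_⟩
    · have h := Fin.sum_univ_add (f := fun i : Fin ((n1+1)+(n2+1)) =>
        Fin.append c1 c2 i • br (Fin.append a1 a2 i) (Fin.append b1 b2 i))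
      simp only [Fin.append_left, Fin.append_right] at h
      exact h.symm
    · apply Finset.le_inf'
      intro i _
      refine Fin.addCases (m := n1 + 1) (n := n2 + 1) (fun j => ?_) (fun j => ?_) i
      · rw [Fin.append_left, Fin.append_left]
        exact h1.trans (Finset.inf'_le _ (Finset.mem_univ j))
      · rw [Fin.append_right, Fin.append_right]
        exact h2.trans (Finset.inf'_le _ (Finset.mem_univ j))
  smul_mem' := by
    rintro k x (rfl | ⟨n, c, a, b, rfl, h⟩)
    · exact Or.inl (smul_zero k)
    refine Or.inr ⟨n, fun i => k * c i, a, b, ?_, h⟩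
    rw [Finset.smul_sum]
    refine Finset.sum_congr rfl fun i _ => ?_
    show k • c i • br (a i) (b i) = (k * c i) • br (a i) (b i)
    rw [smul_smul]

variable {K : Type*} [Field K] {V : Type*} [AddCommGroup V] [Module K V]
variable {V0 V1 : Submodule K V} {br : V → V → V}

lemma mem_Mset {f g : V → ℝ} {t : ℝ} {z : V} :
    z ∈ Mset K br f g t ↔ (z = 0 ∨ ∃ (n : ℕ) (c : Fin (n + 1) → K) (a b : Fin (n + 1) → V),
      z = ∑ i, c i • br (a i) (b i) ∧
      t ≤ Finset.univ.inf' Finset.univ_nonempty fun i => min (f (a i)) (g (b i))) :=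
  Iff.rfl

lemma single_mem {f g : V → ℝ} {t : ℝ} (k : K) {p q : V} (h : t ≤ min (f p) (g q)) :
    k • br p q ∈ Mset K br f g t := by
  rw [mem_Mset]
  refine Or.inr ⟨0, fun _ => k, fun _ => p, fun _ => q, by simp, by simpa using h⟩

lemma Mset_anti {f g : V → ℝ} {t' t : ℝ} (h : t' ≤ t) :
    Mset K br f g t ≤ Mset K br f g t' := by
  rintro z hz
  rw [mem_Mset] at hz ⊢
  rcases hz with rfl | ⟨n, c, a, b, hx, hv⟩
  · exact Or.inl rfl
  · exact Or.inr ⟨n, c, a, b, hx, h.trans hv⟩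

lemma bddAbove_ins {f g : V → ℝ} (hf1 : ∀ z, f z ≤ 1) (x : V) :
    BddAbove (insert (0:ℝ) (bracketRepMin K br f g x)) := by
  refine ⟨1, ?_⟩
  rintro s (rfl | ⟨n, c, a, b, hx, rfl⟩)
  · norm_num
  · exact le_trans (Finset.inf'_le _ (Finset.mem_univ 0))
      (le_trans (min_le_left _ _) (hf1 _))

lemma Fb_nonneg {f g : V → ℝ} (hf1 : ∀ z, f z ≤ 1) (x : V) : 0 ≤ Fb K br f g x :=
  le_csSup (bddAbove_ins hf1 x) (Set.mem_insert _ _)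

lemma Fb_le_one {f g : V → ℝ} (hf1 : ∀ z, f z ≤ 1) (x : V) : Fb K br f g x ≤ 1 := by
  apply csSup_le (Set.insert_nonempty _ _)
  rintro s (rfl | ⟨n, c, a, b, hx, rfl⟩)
  · norm_num
  · exact le_trans (Finset.inf'_le _ (Finset.mem_univ 0))
      (le_trans (min_le_left _ _) (hf1 _))

lemma le_Fb_of_mem {f g : V → ℝ} (hf1 : ∀ z, f z ≤ 1) (hfz : f 0 = 1) (hgz : g 0 = 1)
    {t : ℝ} {z : V} (ht : t ≤ 1) (h : z ∈ Mset K br f g t) : t ≤ Fb K br f g z := by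
  rw [mem_Mset] at h
  rcases h with rfl | ⟨n, c, a, b, rfl, hval⟩
  · have h1 : (1:ℝ) ∈ bracketRepMin K br f g 0 :=
      ⟨0, fun _ => 0, fun _ => 0, fun _ => 0, by simp, by simp [hfz, hgz]⟩
    exact ht.trans (le_csSup (bddAbove_ins hf1 0) (Set.mem_insert_of_mem _ h1))
  · exact le_trans hval
      (le_csSup (bddAbove_ins hf1 _) (Set.mem_insert_of_mem _ ⟨n, c, a, b, rfl, rfl⟩))

lemma repMin_cases {f g : V → ℝ} (hf1 : ∀ z, f z ≤ 1) {t : ℝ} {x : V}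
    (h : t ∈ insert (0:ℝ) (bracketRepMin K br f g x)) :
    t = 0 ∨ (t ≤ 1 ∧ x ∈ Mset K br f g t) := by
  rcases h with rfl | ⟨n, c, a, b, hx, rfl⟩
  · exact Or.inl rfl
  · refine Or.inr ⟨le_trans (Finset.inf'_le _ (Finset.mem_univ 0))
      ((min_le_left _ _).trans (hf1 _)), ?_⟩
    rw [mem_Mset]
    exact Or.inr ⟨n, c, a, b, hx, le_rfl⟩

lemma min_csSup_le {S T : Set ℝ} (hS : S.Nonempty) (hT : T.Nonempty)
    (hSb : BddAbove S) (hTb : BddAbove T) {c : ℝ}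
    (h : ∀ s ∈ S, ∀ t ∈ T, min s t ≤ c) : min (sSup S) (sSup T) ≤ c := by
  by_contra hlt
  push_neg at hlt
  obtain ⟨s, hs, hcs⟩ := exists_lt_of_lt_csSup hS (lt_of_lt_of_le hlt (min_le_left _ _))
  obtain ⟨t, ht, hct⟩ := exists_lt_of_lt_csSup hT (lt_of_lt_of_le hlt (min_le_right _ _))
  exact absurd (h s hs t ht) (not_le.mpr (lt_min hcs hct))

lemma csInf_one_sub (T : Set ℝ) (hT : T.Nonempty) (hTb : BddAbove T) :
    sInf ((fun t => 1 - t) '' T) = 1 - sSup T := by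
  have hne : ((fun t => 1 - t) '' T).Nonempty := hT.image _
  have hbb : BddBelow ((fun t => 1 - t) '' T) := by
    obtain ⟨b, hb⟩ := hTb
    refine ⟨1 - b, ?_⟩
    rintro y ⟨t, ht, rfl⟩
    have := hb ht
    simp only
    linarith
  apply le_antisymm
  · have h1 : sSup T ≤ 1 - sInf ((fun t => 1 - t) '' T) := by
      apply csSup_le hT
      intro t ht
      have : sInf ((fun t => 1 - t) '' T) ≤ 1 - t := csInf_le hbb ⟨t, ht, rfl⟩
      linarith
    linarith
  · apply le_csInf hne
    rintro y ⟨t, ht, rfl⟩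
    have := le_csSup hTb ht
    simp only
    linarith

lemma inf'_one_sub {ι : Type*} (s : Finset ι) (H : s.Nonempty) (h : ι → ℝ) :
    (s.inf' H fun i => 1 - h i) = 1 - s.sup' H h := by
  apply le_antisymm
  · obtain ⟨i, hi, hival⟩ := s.exists_mem_eq_sup' H h
    rw [hival]
    exact s.inf'_le _ hi
  · apply Finset.le_inf'
    intro i hi
    have := Finset.le_sup' h hi
    linarith

lemma one_sub_min (a b : ℝ) : 1 - min a b = max (1 - a) (1 - b) := by
  rcases le_total a b with h | h
  · rw [min_eq_left h, max_eq_left (by linarith)]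
  · rw [min_eq_right h, max_eq_right (by linarith)]

lemma one_sub_max (a b : ℝ) : 1 - max a b = min (1 - a) (1 - b) := by
  rcases le_total a b with h | h
  · rw [max_eq_right h, min_eq_right (by linarith)]
  · rw [max_eq_left h, min_eq_left (by linarith)]

lemma exists_decomp (hc : IsCompl V0 V1) (x : V) : ∃ u ∈ V0, ∃ v ∈ V1, x = u + v := by
  have hx : x ∈ V0 ⊔ V1 := by rw [hc.sup_eq_top]; trivial
  obtain ⟨u, hu, v, hv, h⟩ := Submodule.mem_sup.mp hx
  exact ⟨u, hu, v, hv, h.symm⟩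

lemma decomp_unique (hc : IsCompl V0 V1) {u u' v v' : V}
    (hu : u ∈ V0) (hu' : u' ∈ V0) (hv : v ∈ V1) (hv' : v' ∈ V1)
    (h : u + v = u' + v') : u = u' ∧ v = v' := by
  have h1 : u - u' = v' - v := by
    rw [sub_eq_sub_iff_add_eq_add, h, add_comm]
  have hm : u - u' ∈ V0 := sub_mem hu hu'
  have hm' : u - u' ∈ V1 := h1 ▸ sub_mem hv' hv
  have h0 : u - u' = 0 := (Submodule.disjoint_def.mp hc.disjoint) _ hm hm'
  have huu : u = u' := sub_eq_zero.mp h0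
  refine ⟨huu, ?_⟩
  rw [huu] at h
  exact add_left_cancel h

/-- A pair of functions with all the properties needed for the bracket product. -/
structure NPair (V0 V1 : Submodule K V) (br : V → V → V) (f g : V → ℝ) : Prop where
  f0 : ∀ z, 0 ≤ f z
  f1 : ∀ z, f z ≤ 1
  g0 : ∀ z, 0 ≤ g z
  g1 : ∀ z, g z ≤ 1
  fz : f 0 = 1
  gz : g 0 = 1
  fbr : ∀ x y, max (f x) (f y) ≤ f (br x y)
  gbr : ∀ x y, max (g x) (g y) ≤ g (br x y)
  fproj : ∀ u v, u ∈ V0 → v ∈ V1 → f (u + v) ≤ min (f u) (f v)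
  gproj : ∀ u v, u ∈ V0 → v ∈ V1 → g (u + v) ≤ min (g u) (g v)

lemma triple_mem (hLS : IsLieSuper K V0 V1 br) {f g : V → ℝ}
    (hP : NPair V0 V1 br f g) {t : ℝ} {u v w : V}
    (hu : u ∈ V0 ∨ u ∈ V1) (hv : v ∈ V0 ∨ v ∈ V1) (hw : w ∈ V0 ∨ w ∈ V1)
    (hfu : t ≤ f u) (hgv : t ≤ g v) :
    br (br u v) w ∈ Mset K br f g t ∧ br w (br u v) ∈ Mset K br f g t := by
  obtain ⟨gu, hu⟩ : ∃ gb : Bool, u ∈ (bif gb then V1 else V0) := by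
    rcases hu with h | h
    exacts [⟨false, h⟩, ⟨true, h⟩]
  obtain ⟨gv, hv⟩ : ∃ gb : Bool, v ∈ (bif gb then V1 else V0) := by
    rcases hv with h | h
    exacts [⟨false, h⟩, ⟨true, h⟩]
  obtain ⟨gw, hw⟩ : ∃ gb : Bool, w ∈ (bif gb then V1 else V0) := by
    rcases hw with h | h
    exacts [⟨false, h⟩, ⟨true, h⟩]
  have hj : sgnK K gu gw • br u (br v w) + sgnK K gu gv • br v (br w u)
      + sgnK K gv gw • br w (br u v) = 0 := hLS.jacobi gu gv gw u hu v hv w hw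
  have hne : sgnK K gv gw ≠ 0 := sgnK_ne_zero K gv gw
  have h0 : sgnK K gv gw • br w (br u v)
      = -(sgnK K gu gw • br u (br v w)) - sgnK K gu gv • br v (br w u) := by
    rw [eq_neg_of_add_eq_zero_right hj]
    abel
  have hX : br w (br u v)
      = (-((sgnK K gv gw)⁻¹ * sgnK K gu gw)) • br u (br v w)
        + (-((sgnK K gv gw)⁻¹ * sgnK K gu gv)) • br v (br w u) := by
    have h : br w (br u v) = (sgnK K gv gw)⁻¹ • (sgnK K gv gw • br w (br u v)) := by
      rw [smul_smul, inv_mul_cancel₀ hne, one_smul]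
    rw [h, h0]
    module
  have hwu : br w u ∈ (bif xor gw gu then V1 else V0) := hLS.grade gw gu w hw u hu
  have hsk := hLS.skew gv (xor gw gu) v hv (br w u) hwu
  have m1 : (-((sgnK K gv gw)⁻¹ * sgnK K gu gw)) • br u (br v w) ∈ Mset K br f g t :=
    single_mem _ (le_min hfu (hgv.trans ((le_max_left _ _).trans (hP.gbr v w))))
  have m2 : (-((sgnK K gv gw)⁻¹ * sgnK K gu gv)) • br v (br w u) ∈ Mset K br f g t := by
    rw [hsk, smul_neg, smul_smul, ← neg_smul]
    exact single_mem _ (le_min (hfu.trans ((le_max_right _ _).trans (hP.fbr w u))) hgv)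
  have goal2 : br w (br u v) ∈ Mset K br f g t := by
    rw [hX]
    exact add_mem m1 m2
  have huv : br u v ∈ (bif xor gu gv then V1 else V0) := hLS.grade gu gv u hu v hv
  have hsk2 := hLS.skew (xor gu gv) gw (br u v) huv w hw
  refine ⟨?_, goal2⟩
  rw [hsk2]
  exact neg_mem (Submodule.smul_mem _ _ goal2)

lemma bracket_mem (hLS : IsLieSuper K V0 V1 br) {f g : V → ℝ}
    (hP : NPair V0 V1 br f g) {t : ℝ} {x : V}
    (hx : x ∈ Mset K br f g t) (y : V) :
    br x y ∈ Mset K br f g t ∧ br y x ∈ Mset K br f g t := by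
  have br0l : ∀ z, br 0 z = 0 := fun z => by simpa using hLS.smul_left 0 z z
  have br0r : ∀ z, br z 0 = 0 := fun z => by simpa using hLS.smul_right 0 z z
  rw [mem_Mset] at hx
  obtain rfl | ⟨n, c, a, b, rfl, hval⟩ := hx
  · constructor
    · rw [br0l]; exact zero_mem _
    · rw [br0r]; exact zero_mem _
  have key : ∀ i : Fin (n + 1), br (br (a i) (b i)) y ∈ Mset K br f g t ∧
      br y (br (a i) (b i)) ∈ Mset K br f g t := by
    intro i
    have hti : t ≤ min (f (a i)) (g (b i)) := hval.trans (Finset.inf'_le _ (Finset.mem_univ i))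
    obtain ⟨a0, ha0, a1, ha1, hae⟩ := exists_decomp hLS.compl (a i)
    obtain ⟨b0, hb0, b1, hb1, hbe⟩ := exists_decomp hLS.compl (b i)
    obtain ⟨y0, hy0, y1, hy1, hye⟩ := exists_decomp hLS.compl y
    have hfa : t ≤ min (f a0) (f a1) := by
      refine le_trans (hti.trans (min_le_left _ _)) ?_
      rw [hae]
      exact hP.fproj a0 a1 ha0 ha1
    have hgb : t ≤ min (g b0) (g b1) := by
      refine le_trans (hti.trans (min_le_right _ _)) ?_
      rw [hbe]
      exact hP.gproj b0 b1 hb0 hb1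
    have hfa0 : t ≤ f a0 := hfa.trans (min_le_left _ _)
    have hfa1 : t ≤ f a1 := hfa.trans (min_le_right _ _)
    have hgb0 : t ≤ g b0 := hgb.trans (min_le_left _ _)
    have hgb1 : t ≤ g b1 := hgb.trans (min_le_right _ _)
    constructor
    · rw [hae, hbe, hye]
      simp only [hLS.add_left, hLS.add_right]
      repeat' apply add_mem
      all_goals
        refine (triple_mem hLS hP ?_ ?_ ?_ ?_ ?_).1 <;>
          first
            | exact Or.inl ha0 | exact Or.inr ha1 | exact Or.inl hb0 | exact Or.inr hb1
            | exact Or.inl hy0 | exact Or.inr hy1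
            | exact hfa0 | exact hfa1 | exact hgb0 | exact hgb1
    · rw [hae, hbe, hye]
      simp only [hLS.add_left, hLS.add_right]
      repeat' apply add_mem
      all_goals
        refine (triple_mem hLS hP ?_ ?_ ?_ ?_ ?_).2 <;>
          first
            | exact Or.inl ha0 | exact Or.inr ha1 | exact Or.inl hb0 | exact Or.inr hb1
            | exact Or.inl hy0 | exact Or.inr hy1
            | exact hfa0 | exact hfa1 | exact hgb0 | exact hgb1
  constructor
  · have hsum : br (∑ i, c i • br (a i) (b i)) y = ∑ i, c i • br (br (a i) (b i)) y := by
      let L : V →+ V := AddMonoidHom.mk' (fun z => br z y) (fun p q => hLS.add_left p q y)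
      have h1 : br (∑ i, c i • br (a i) (b i)) y = L (∑ i, c i • br (a i) (b i)) := rfl
      rw [h1, map_sum]
      refine Finset.sum_congr rfl fun i _ => ?_
      show br (c i • br (a i) (b i)) y = c i • br (br (a i) (b i)) y
      rw [hLS.smul_left]
    rw [hsum]
    exact Submodule.sum_mem _ fun i _ => Submodule.smul_mem _ _ (key i).1
  · have hsum : br y (∑ i, c i • br (a i) (b i)) = ∑ i, c i • br y (br (a i) (b i)) := by
      let L : V →+ V := AddMonoidHom.mk' (fun z => br y z) (fun p q => hLS.add_right y p q)
      have h1 : br y (∑ i, c i • br (a i) (b i)) = L (∑ i, c i • br (a i) (b i)) := rfl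
      rw [h1, map_sum]
      refine Finset.sum_congr rfl fun i _ => ?_
      show br y (c i • br (a i) (b i)) = c i • br y (br (a i) (b i))
      rw [hLS.smul_right]
    rw [hsum]
    exact Submodule.sum_mem _ fun i _ => Submodule.smul_mem _ _ (key i).2

lemma Fb_add {f g : V → ℝ} (hP : NPair V0 V1 br f g) (x y : V) :
    min (Fb K br f g x) (Fb K br f g y) ≤ Fb K br f g (x + y) := by
  apply min_csSup_le (Set.insert_nonempty _ _) (Set.insert_nonempty _ _)
    (bddAbove_ins hP.f1 x) (bddAbove_ins hP.f1 y)
  intro s hs u hu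
  rcases repMin_cases hP.f1 hs with rfl | ⟨hs1, hxm⟩
  · exact (min_le_left _ _).trans (Fb_nonneg hP.f1 _)
  rcases repMin_cases hP.f1 hu with rfl | ⟨hu1, hym⟩
  · exact (min_le_right _ _).trans (Fb_nonneg hP.f1 _)
  · exact le_Fb_of_mem hP.f1 hP.fz hP.gz (le_trans (min_le_left _ _) hs1)
      (add_mem (Mset_anti (min_le_left s u) hxm) (Mset_anti (min_le_right s u) hym))

lemma Fb_smul {f g : V → ℝ} (hP : NPair V0 V1 br f g) (c : K) (x : V) :
    Fb K br f g x ≤ Fb K br f g (c • x) := by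
  apply csSup_le (Set.insert_nonempty _ _)
  intro s hs
  rcases repMin_cases hP.f1 hs with rfl | ⟨hs1, hxm⟩
  · exact Fb_nonneg hP.f1 _
  · exact le_Fb_of_mem hP.f1 hP.fz hP.gz hs1 (Submodule.smul_mem _ c hxm)

lemma Fb_zero {f g : V → ℝ} (hP : NPair V0 V1 br f g) : Fb K br f g (0 : V) = 1 :=
  le_antisymm (Fb_le_one hP.f1 0)
    (le_Fb_of_mem hP.f1 hP.fz hP.gz le_rfl (zero_mem _))

lemma Fb_br (hLS : IsLieSuper K V0 V1 br) {f g : V → ℝ} (hP : NPair V0 V1 br f g)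
    (x y : V) : max (Fb K br f g x) (Fb K br f g y) ≤ Fb K br f g (br x y) := by
  apply max_le
  · apply csSup_le (Set.insert_nonempty _ _)
    intro s hs
    rcases repMin_cases hP.f1 hs with rfl | ⟨hs1, hm⟩
    · exact Fb_nonneg hP.f1 _
    · exact le_Fb_of_mem hP.f1 hP.fz hP.gz hs1 (bracket_mem hLS hP hm y).1
  · apply csSup_le (Set.insert_nonempty _ _)
    intro s hs
    rcases repMin_cases hP.f1 hs with rfl | ⟨hs1, hm⟩
    · exact Fb_nonneg hP.f1 _
    · exact le_Fb_of_mem hP.f1 hP.fz hP.gz hs1 (bracket_mem hLS hP hm x).2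

lemma Fb_proj (hLS : IsLieSuper K V0 V1 br) {f g : V → ℝ} (hP : NPair V0 V1 br f g)
    (u v : V) (hu : u ∈ V0) (hv : v ∈ V1) :
    Fb K br f g (u + v) ≤ min (Fb K br f g u) (Fb K br f g v) := by
  have key : ∀ s ∈ insert (0:ℝ) (bracketRepMin K br f g (u + v)),
      s ≤ Fb K br f g u ∧ s ≤ Fb K br f g v := by
    rintro s (rfl | ⟨n, c, a, b, hx, rfl⟩)
    · exact ⟨Fb_nonneg hP.f1 _, Fb_nonneg hP.f1 _⟩
    set s := Finset.univ.inf' Finset.univ_nonempty fun i => min (f (a i)) (g (b i)) with hsdef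
    have hs1 : s ≤ 1 := le_trans (Finset.inf'_le _ (Finset.mem_univ 0))
      ((min_le_left _ _).trans (hP.f1 _))
    have hsf : ∀ i, s ≤ f (a i) := fun i =>
      (Finset.inf'_le _ (Finset.mem_univ i)).trans (min_le_left _ _)
    have hsg : ∀ i, s ≤ g (b i) := fun i =>
      (Finset.inf'_le _ (Finset.mem_univ i)).trans (min_le_right _ _)
    choose A0 hA0 A1 hA1 hAe using fun i => exists_decomp hLS.compl (a i)
    choose B0 hB0 B1 hB1 hBe using fun i => exists_decomp hLS.compl (b i)
    have hfA : ∀ i, s ≤ min (f (A0 i)) (f (A1 i)) := fun i => by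
      refine (hsf i).trans ?_
      rw [hAe i]
      exact hP.fproj _ _ (hA0 i) (hA1 i)
    have hgB : ∀ i, s ≤ min (g (B0 i)) (g (B1 i)) := fun i => by
      refine (hsg i).trans ?_
      rw [hBe i]
      exact hP.gproj _ _ (hB0 i) (hB1 i)
    have sm : ∀ p q : V, s ≤ f p → s ≤ g q → br p q ∈ Mset K br f g s := by
      intro p q h1 h2
      have := single_mem (br := br) (1 : K) (le_min h1 h2)
      rwa [one_smul] at this
    have hz0m : (∑ i, c i • (br (A0 i) (B0 i) + br (A1 i) (B1 i))) ∈ Mset K br f g s :=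
      Submodule.sum_mem _ fun i _ => Submodule.smul_mem _ _ (add_mem
        (sm _ _ ((hfA i).trans (min_le_left _ _)) ((hgB i).trans (min_le_left _ _)))
        (sm _ _ ((hfA i).trans (min_le_right _ _)) ((hgB i).trans (min_le_right _ _))))
    have hz1m : (∑ i, c i • (br (A0 i) (B1 i) + br (A1 i) (B0 i))) ∈ Mset K br f g s :=
      Submodule.sum_mem _ fun i _ => Submodule.smul_mem _ _ (add_mem
        (sm _ _ ((hfA i).trans (min_le_left _ _)) ((hgB i).trans (min_le_right _ _)))
        (sm _ _ ((hfA i).trans (min_le_right _ _)) ((hgB i).trans (min_le_left _ _))))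
    have hz0v : (∑ i, c i • (br (A0 i) (B0 i) + br (A1 i) (B1 i))) ∈ V0 :=
      Submodule.sum_mem _ fun i _ => Submodule.smul_mem _ _ (add_mem
        (hLS.grade false false _ (hA0 i) _ (hB0 i))
        (hLS.grade true true _ (hA1 i) _ (hB1 i)))
    have hz1v : (∑ i, c i • (br (A0 i) (B1 i) + br (A1 i) (B0 i))) ∈ V1 :=
      Submodule.sum_mem _ fun i _ => Submodule.smul_mem _ _ (add_mem
        (hLS.grade false true _ (hA0 i) _ (hB1 i))
        (hLS.grade true false _ (hA1 i) _ (hB0 i)))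
    have hsum : u + v = (∑ i, c i • (br (A0 i) (B0 i) + br (A1 i) (B1 i)))
        + (∑ i, c i • (br (A0 i) (B1 i) + br (A1 i) (B0 i))) := by
      rw [hx, ← Finset.sum_add_distrib]
      refine Finset.sum_congr rfl fun i _ => ?_
      rw [hAe i, hBe i, hLS.add_left, hLS.add_right, hLS.add_right]
      module
    obtain ⟨hu', hv'⟩ := decomp_unique hLS.compl hu hz0v hv hz1v hsum
    constructor
    · rw [hu']
      exact le_Fb_of_mem hP.f1 hP.fz hP.gz hs1 hz0m
    · rw [hv']
      exact le_Fb_of_mem hP.f1 hP.fz hP.gz hs1 hz1m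
  exact le_min (csSup_le (Set.insert_nonempty _ _) fun s hs => (key s hs).1)
    (csSup_le (Set.insert_nonempty _ _) fun s hs => (key s hs).2)

lemma Fb_mono {f g f' g' : V → ℝ} (hf : ∀ z, f z ≤ f' z) (hg : ∀ z, g z ≤ g' z)
    (hf1 : ∀ z, f' z ≤ 1) (x : V) : Fb K br f g x ≤ Fb K br f' g' x := by
  apply csSup_le (Set.insert_nonempty _ _)
  rintro s (rfl | ⟨n, c, a, b, hx, rfl⟩)
  · exact Fb_nonneg hf1 x
  · refine le_trans ?_ (le_csSup (bddAbove_ins hf1 x) (Set.mem_insert_of_mem _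
      ⟨n, c, a, b, hx, rfl⟩))
    apply Finset.le_inf'
    intro i _
    exact le_trans (Finset.inf'_le _ (Finset.mem_univ i)) (min_le_min (hf _) (hg _))

lemma repMax_eq (p q : V → ℝ) (x : V) :
    insert (1:ℝ) (bracketRepMax K br p q x)
      = (fun t => 1 - t) '' insert 0
          (bracketRepMin K br (fun z => 1 - p z) (fun z => 1 - q z) x) := by
  have hmin : ∀ (m : ℕ) (a b : Fin (m+1) → V),
      (Finset.univ.inf' Finset.univ_nonempty fun i =>
        min ((fun z => 1 - p z) (a i)) ((fun z => 1 - q z) (b i)))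
      = 1 - Finset.univ.sup' Finset.univ_nonempty fun i => max (p (a i)) (q (b i)) := by
    intro m a b
    rw [show (fun i : Fin (m+1) => min ((fun z => 1 - p z) (a i)) ((fun z => 1 - q z) (b i)))
        = fun i => 1 - max (p (a i)) (q (b i)) from funext fun i => min_sub_sub_left 1 _ _]
    exact inf'_one_sub _ _ _
  ext s
  constructor
  · rintro (rfl | ⟨n, c, a, b, hx, rfl⟩)
    · exact ⟨0, Set.mem_insert _ _, by norm_num⟩
    · refine ⟨_, Set.mem_insert_of_mem _ ⟨n, c, a, b, hx, rfl⟩, ?_⟩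
      rw [hmin n a b]
      ring
  · rintro ⟨s', hs', rfl⟩
    rcases hs' with rfl | ⟨n, c, a, b, hx, rfl⟩
    · simp
    · refine Set.mem_insert_of_mem _ ⟨n, c, a, b, hx, ?_⟩
      rw [hmin n a b]
      ring

lemma bracket_rhat_eq (p q : V → ℝ) (hp0 : ∀ z, 0 ≤ p z) (x : V) :
    sInf (insert 1 (bracketRepMax K br p q x))
      = 1 - Fb K br (fun z => 1 - p z) (fun z => 1 - q z) x := by
  rw [repMax_eq]
  exact csInf_one_sub _ (Set.insert_nonempty _ _)
    (bddAbove_ins (fun z => by show (1:ℝ) - p z ≤ 1; linarith [hp0 z]) x)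

lemma infDecomp_dual (p q : V → ℝ) (hp0 : ∀ z, 0 ≤ p z) (x : V) :
    infDecomp p q x = 1 - supDecomp (fun z => 1 - p z) (fun z => 1 - q z) x := by
  have hset : insert (1:ℝ) {t | ∃ a b : V, x = a + b ∧ t = max (p a) (q b)}
      = (fun t => 1 - t) '' insert 0
          {t | ∃ a b : V, x = a + b ∧ t = min ((fun z => 1 - p z) a) ((fun z => 1 - q z) b)} := by
    ext s
    constructor
    · rintro (rfl | ⟨a, b, hab, rfl⟩)
      · exact ⟨0, Set.mem_insert _ _, by norm_num⟩
      · refine ⟨_, Set.mem_insert_of_mem _ ⟨a, b, hab, rfl⟩, ?_⟩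
        show 1 - min (1 - p a) (1 - q b) = max (p a) (q b)
        rw [min_sub_sub_left]
        ring
    · rintro ⟨s', hs', rfl⟩
      rcases hs' with rfl | ⟨a, b, hab, rfl⟩
      · simp
      · refine Set.mem_insert_of_mem _ ⟨a, b, hab, ?_⟩
        show 1 - min (1 - p a) (1 - q b) = max (p a) (q b)
        rw [min_sub_sub_left]
        ring
  have hbdd : BddAbove (insert (0:ℝ)
      {t | ∃ a b : V, x = a + b ∧ t = min ((fun z => 1 - p z) a) ((fun z => 1 - q z) b)}) := by
    refine ⟨1, ?_⟩
    rintro s (rfl | ⟨a, b, hab, rfl⟩)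
    · norm_num
    · refine (min_le_left _ _).trans ?_
      show 1 - p a ≤ 1
      linarith [hp0 a]
  show sInf _ = 1 - sSup _
  rw [hset]
  exact csInf_one_sub _ (Set.insert_nonempty _ _) hbdd

open Classical in
lemma restrict_supDecomp (W0 W1 : Submodule K V) (hc : IsCompl W0 W1) (φ : V → ℝ)
    (h0 : ∀ z, 0 ≤ φ z) (h1 : ∀ z, φ z ≤ 1)
    (hadd : ∀ x y, min (φ x) (φ y) ≤ φ (x + y))
    (hproj : ∀ u v, u ∈ W0 → v ∈ W1 → φ (u + v) ≤ min (φ u) (φ v)) (x : V) :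
    supDecomp (fun z => if z ∈ W0 then φ z else 0) (fun z => if z ∈ W1 then φ z else 0) x
      = φ x := by
  apply le_antisymm
  · apply csSup_le (Set.insert_nonempty _ _)
    rintro s (rfl | ⟨a, b, rfl, rfl⟩)
    · exact h0 _
    · by_cases ha : a ∈ W0
      · by_cases hb : b ∈ W1
        · simp only [if_pos ha, if_pos hb]
          exact hadd a b
        · simp only [if_neg hb]
          exact (min_le_right _ _).trans (h0 _)
      · simp only [if_neg ha]
        exact (min_le_left _ _).trans (h0 _)
  · obtain ⟨u, hu, v, hv, hx⟩ := exists_decomp hc x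
    have hbdd : BddAbove (insert (0:ℝ) {t | ∃ a b : V, x = a + b ∧
        t = min (if a ∈ W0 then φ a else 0) (if b ∈ W1 then φ b else 0)}) := by
      refine ⟨1, ?_⟩
      rintro s (rfl | ⟨a, b, _, rfl⟩)
      · norm_num
      · refine (min_le_left _ _).trans ?_
        split_ifs
        · exact h1 _
        · norm_num
    have hmem : min (if u ∈ W0 then φ u else 0) (if v ∈ W1 then φ v else 0)
        ∈ insert (0:ℝ) {t | ∃ a b : V, x = a + b ∧
          t = min (if a ∈ W0 then φ a else 0) (if b ∈ W1 then φ b else 0)} :=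
      Set.mem_insert_of_mem _ ⟨u, v, hx, rfl⟩
    refine le_trans ?_ (le_csSup hbdd hmem)
    rw [if_pos hu, if_pos hv, hx]
    exact hproj u v hu hv

lemma graded_proj (hc : IsCompl V0 V1) (φ φ0 φ1 : V → ℝ)
    (heq : ∀ x, φ x = supDecomp φ0 φ1 x)
    (h0out : ∀ x, x ∉ V0 → φ0 x = 0) (h1out : ∀ x, x ∉ V1 → φ1 x = 0)
    (h0le : ∀ x, φ0 x ≤ 1) (h1le : ∀ x, φ1 x ≤ 1)
    (h0z : φ0 0 = 1) (h1z : φ1 0 = 1) :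
    ∀ u v, u ∈ V0 → v ∈ V1 → φ (u + v) ≤ min (φ u) (φ v) := by
  have hbdd : ∀ x : V, BddAbove (insert (0:ℝ)
      {t | ∃ a b : V, x = a + b ∧ t = min (φ0 a) (φ1 b)}) := by
    intro x
    refine ⟨1, ?_⟩
    rintro s (rfl | ⟨a, b, _, rfl⟩)
    · norm_num
    · exact (min_le_left _ _).trans (h0le a)
  have hnn : ∀ x, 0 ≤ φ x := fun x => by
    rw [heq]
    exact le_csSup (hbdd x) (Set.mem_insert _ _)
  have hφ0 : ∀ x, φ0 x ≤ φ x := fun x => by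
    rw [heq]
    refine le_trans ?_ (le_csSup (hbdd x) (Set.mem_insert_of_mem _
      ⟨x, 0, (add_zero x).symm, rfl⟩))
    rw [h1z]
    exact le_min le_rfl (h0le x)
  have hφ1 : ∀ x, φ1 x ≤ φ x := fun x => by
    rw [heq]
    refine le_trans ?_ (le_csSup (hbdd x) (Set.mem_insert_of_mem _
      ⟨0, x, (zero_add x).symm, rfl⟩))
    rw [h0z]
    exact le_min (h1le x) le_rfl
  intro u v hu hv
  rw [heq (u + v)]
  apply csSup_le (Set.insert_nonempty _ _)
  rintro s (rfl | ⟨a, b, hab, rfl⟩)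
  · exact le_min (hnn u) (hnn v)
  · by_cases ha : a ∈ V0
    · by_cases hb : b ∈ V1
      · obtain ⟨hau, hbv⟩ := decomp_unique hc ha hu hb hv hab.symm
        rw [hau, hbv]
        exact min_le_min (hφ0 u) (hφ1 v)
      · rw [h1out b hb]
        exact (min_le_right _ _).trans (le_min (hnn u) (hnn v))
    · rw [h0out a ha]
      exact (min_le_left _ _).trans (le_min (hnn u) (hnn v))

open Classical in
lemma restrict_subspace (W : Submodule K V) (C : CIFSet V) (hC : CIFSet.IsSubspace K C) :
    CIFSet.IsSubspace K (⟨fun x => if x ∈ W then C.r x else 0,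
      fun x => if x ∈ W then C.w x else 0,
      fun x => if x ∈ W then C.rhat x else 1,
      fun x => if x ∈ W then C.what x else 1⟩ : CIFSet V) := by
  have hmin : ∀ (φ : V → ℝ), (∀ z, 0 ≤ φ z) → (∀ x y, min (φ x) (φ y) ≤ φ (x + y)) →
      ∀ x y, min (if x ∈ W then φ x else 0) (if y ∈ W then φ y else 0)
        ≤ (if x + y ∈ W then φ (x + y) else 0) := by
    intro φ h0 hadd x y
    by_cases hx : x ∈ W
    · by_cases hy : y ∈ W
      · rw [if_pos hx, if_pos hy, if_pos (W.add_mem hx hy)]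
        exact hadd x y
      · rw [if_neg hy]
        refine (min_le_right _ _).trans ?_
        split_ifs
        · exact h0 _
        · exact le_rfl
    · rw [if_neg hx]
      refine (min_le_left _ _).trans ?_
      split_ifs
      · exact h0 _
      · exact le_rfl
  have hmax : ∀ (φ : V → ℝ), (∀ z, φ z ≤ 1) → (∀ x y, φ (x + y) ≤ max (φ x) (φ y)) →
      ∀ x y, (if x + y ∈ W then φ (x + y) else 1)
        ≤ max (if x ∈ W then φ x else 1) (if y ∈ W then φ y else 1) := by
    intro φ h1 hadd x y
    by_cases hx : x ∈ W
    · by_cases hy : y ∈ W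
      · rw [if_pos hx, if_pos hy, if_pos (W.add_mem hx hy)]
        exact hadd x y
      · rw [if_neg hy]
        refine le_trans ?_ (le_max_right _ _)
        split_ifs
        · exact h1 _
        · exact le_rfl
    · rw [if_neg hx]
      refine le_trans ?_ (le_max_left _ _)
      split_ifs
      · exact h1 _
      · exact le_rfl
  have hsmul : ∀ (φ : V → ℝ), (∀ z, 0 ≤ φ z) → (∀ (c : K) x, φ x ≤ φ (c • x)) →
      ∀ (c : K) x, (if x ∈ W then φ x else 0) ≤ (if c • x ∈ W then φ (c • x) else 0) := by
    intro φ h0 hs c x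
    by_cases hx : x ∈ W
    · rw [if_pos hx, if_pos (W.smul_mem c hx)]
      exact hs c x
    · rw [if_neg hx]
      split_ifs
      · exact h0 _
      · exact le_rfl
  have hsmul' : ∀ (φ : V → ℝ), (∀ z, φ z ≤ 1) → (∀ (c : K) x, φ (c • x) ≤ φ x) →
      ∀ (c : K) x, (if c • x ∈ W then φ (c • x) else 1) ≤ (if x ∈ W then φ x else 1) := by
    intro φ h1 hs c x
    by_cases hx : x ∈ W
    · rw [if_pos hx, if_pos (W.smul_mem c hx)]
      exact hs c x
    · rw [if_neg hx]
      split_ifs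
      · exact h1 _
      · exact le_rfl
  refine ⟨?_, ?_, ?_, ?_, ?_, ?_, ?_, ?_, ?_, ?_, ?_, ?_, ?_⟩
  · intro x
    refine ⟨?_, ?_, ?_, ?_, ?_⟩ <;> simp only <;> split_ifs with h
    · exact ⟨(hC.isCIF x).1.1, (hC.isCIF x).1.2⟩
    · exact ⟨le_rfl, by norm_num⟩
    · exact ⟨(hC.isCIF x).2.1.1, (hC.isCIF x).2.1.2⟩
    · exact ⟨le_rfl, by norm_num⟩
    · exact ⟨(hC.isCIF x).2.2.1.1, (hC.isCIF x).2.2.1.2⟩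
    · exact ⟨by norm_num, le_rfl⟩
    · exact ⟨(hC.isCIF x).2.2.2.1.1, (hC.isCIF x).2.2.2.1.2⟩
    · exact ⟨by norm_num, le_rfl⟩
    · exact (hC.isCIF x).2.2.2.2
    · norm_num
  · exact hmin C.r (fun z => (hC.isCIF z).1.1) hC.add_r
  · exact hmin C.w (fun z => (hC.isCIF z).2.1.1) hC.add_w
  · exact hmax C.rhat (fun z => (hC.isCIF z).2.2.1.2) hC.add_rhat
  · exact hmax C.what (fun z => (hC.isCIF z).2.2.2.1.2) hC.add_what
  · exact hsmul C.r (fun z => (hC.isCIF z).1.1) hC.smul_r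
  · exact hsmul C.w (fun z => (hC.isCIF z).2.1.1) hC.smul_w
  · exact hsmul' C.rhat (fun z => (hC.isCIF z).2.2.1.2) hC.smul_rhat
  · exact hsmul' C.what (fun z => (hC.isCIF z).2.2.2.1.2) hC.smul_what
  · show (if (0:V) ∈ W then C.r 0 else 0) = 1
    rw [if_pos (zero_mem W), hC.r_zero]
  · show (if (0:V) ∈ W then C.w 0 else 0) = 1
    rw [if_pos (zero_mem W), hC.w_zero]
  · show (if (0:V) ∈ W then C.rhat 0 else 1) = 0
    rw [if_pos (zero_mem W), hC.rhat_zero]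
  · show (if (0:V) ∈ W then C.what 0 else 1) = 0
    rw [if_pos (zero_mem W), hC.what_zero]

lemma CIFSet.ext'_s11 {X Y : CIFSet V} (h1 : X.r = Y.r) (h2 : X.w = Y.w)
    (h3 : X.rhat = Y.rhat) (h4 : X.what = Y.what) : X = Y := by
  cases X; cases Y
  simp_all

end BracketAux


theorem bracket_isIdeal {K : Type*} [Field K] {V : Type*} [AddCommGroup V] [Module K V]
    (V0 V1 : Submodule K V) (br : V → V → V) (hLS : IsLieSuper K V0 V1 br)
    (A B : CIFSet V) (hA : IsIdeal K V0 V1 br A) (hB : IsIdeal K V0 V1 br B) :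
    IsIdeal K V0 V1 br (CIFSet.bracket K br A B) := by
  classical
  obtain ⟨A0, A1, hAg⟩ := hA.graded
  obtain ⟨B0, B1, hBg⟩ := hB.graded
  have hAc := hAg.subA.isCIF
  have hBc := hBg.subA.isCIF
  have hA0c := hAg.sub0.isCIF
  have hA1c := hAg.sub1.isCIF
  have hB0c := hBg.sub0.isCIF
  have hB1c := hBg.sub1.isCIF
  have NPr : NPair V0 V1 br A.r B.r :=
    { f0 := fun z => (hAc z).1.1, f1 := fun z => (hAc z).1.2
      g0 := fun z => (hBc z).1.1, g1 := fun z => (hBc z).1.2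
      fz := hAg.subA.r_zero, gz := hBg.subA.r_zero
      fbr := hA.br_r, gbr := hB.br_r
      fproj := graded_proj hLS.compl A.r A0.r A1.r (fun x => by rw [hAg.eq]; rfl)
        (fun x hx => (hAg.supp0 x hx).1) (fun x hx => (hAg.supp1 x hx).1)
        (fun x => (hA0c x).1.2) (fun x => (hA1c x).1.2)
        hAg.sub0.r_zero hAg.sub1.r_zero
      gproj := graded_proj hLS.compl B.r B0.r B1.r (fun x => by rw [hBg.eq]; rfl)
        (fun x hx => (hBg.supp0 x hx).1) (fun x hx => (hBg.supp1 x hx).1)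
        (fun x => (hB0c x).1.2) (fun x => (hB1c x).1.2)
        hBg.sub0.r_zero hBg.sub1.r_zero }
  have NPw : NPair V0 V1 br A.w B.w :=
    { f0 := fun z => (hAc z).2.1.1, f1 := fun z => (hAc z).2.1.2
      g0 := fun z => (hBc z).2.1.1, g1 := fun z => (hBc z).2.1.2
      fz := hAg.subA.w_zero, gz := hBg.subA.w_zero
      fbr := hA.br_w, gbr := hB.br_w
      fproj := graded_proj hLS.compl A.w A0.w A1.w (fun x => by rw [hAg.eq]; rfl)
        (fun x hx => (hAg.supp0 x hx).2.1) (fun x hx => (hAg.supp1 x hx).2.1)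
        (fun x => (hA0c x).2.1.2) (fun x => (hA1c x).2.1.2)
        hAg.sub0.w_zero hAg.sub1.w_zero
      gproj := graded_proj hLS.compl B.w B0.w B1.w (fun x => by rw [hBg.eq]; rfl)
        (fun x hx => (hBg.supp0 x hx).2.1) (fun x hx => (hBg.supp1 x hx).2.1)
        (fun x => (hB0c x).2.1.2) (fun x => (hB1c x).2.1.2)
        hBg.sub0.w_zero hBg.sub1.w_zero }
  have NPrh : NPair V0 V1 br (fun z => 1 - A.rhat z) (fun z => 1 - B.rhat z) :=
    { f0 := fun z => by show (0:ℝ) ≤ 1 - A.rhat z; linarith [(hAc z).2.2.1.2]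
      f1 := fun z => by show (1:ℝ) - A.rhat z ≤ 1; linarith [(hAc z).2.2.1.1]
      g0 := fun z => by show (0:ℝ) ≤ 1 - B.rhat z; linarith [(hBc z).2.2.1.2]
      g1 := fun z => by show (1:ℝ) - B.rhat z ≤ 1; linarith [(hBc z).2.2.1.1]
      fz := by show (1:ℝ) - A.rhat 0 = 1; rw [hAg.subA.rhat_zero]; ring
      gz := by show (1:ℝ) - B.rhat 0 = 1; rw [hBg.subA.rhat_zero]; ring
      fbr := fun x y => by
        show max (1 - A.rhat x) (1 - A.rhat y) ≤ 1 - A.rhat (br x y)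
        rw [← one_sub_min]
        linarith [hA.br_rhat x y]
      gbr := fun x y => by
        show max (1 - B.rhat x) (1 - B.rhat y) ≤ 1 - B.rhat (br x y)
        rw [← one_sub_min]
        linarith [hB.br_rhat x y]
      fproj := graded_proj hLS.compl (fun z => 1 - A.rhat z)
        (fun z => 1 - A0.rhat z) (fun z => 1 - A1.rhat z)
        (fun x => by
          have h1 : A.rhat x = infDecomp A0.rhat A1.rhat x := by rw [hAg.eq]; rfl
          have h2 := infDecomp_dual A0.rhat A1.rhat (fun z => (hA0c z).2.2.1.1) x
          show 1 - A.rhat x = _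
          rw [h1, h2]
          ring)
        (fun x hx => by show (1:ℝ) - A0.rhat x = 0; rw [(hAg.supp0 x hx).2.2.1]; ring)
        (fun x hx => by show (1:ℝ) - A1.rhat x = 0; rw [(hAg.supp1 x hx).2.2.1]; ring)
        (fun x => by show (1:ℝ) - A0.rhat x ≤ 1; linarith [(hA0c x).2.2.1.1])
        (fun x => by show (1:ℝ) - A1.rhat x ≤ 1; linarith [(hA1c x).2.2.1.1])
        (by show (1:ℝ) - A0.rhat 0 = 1; rw [hAg.sub0.rhat_zero]; ring)
        (by show (1:ℝ) - A1.rhat 0 = 1; rw [hAg.sub1.rhat_zero]; ring)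
      gproj := graded_proj hLS.compl (fun z => 1 - B.rhat z)
        (fun z => 1 - B0.rhat z) (fun z => 1 - B1.rhat z)
        (fun x => by
          have h1 : B.rhat x = infDecomp B0.rhat B1.rhat x := by rw [hBg.eq]; rfl
          have h2 := infDecomp_dual B0.rhat B1.rhat (fun z => (hB0c z).2.2.1.1) x
          show 1 - B.rhat x = _
          rw [h1, h2]
          ring)
        (fun x hx => by show (1:ℝ) - B0.rhat x = 0; rw [(hBg.supp0 x hx).2.2.1]; ring)
        (fun x hx => by show (1:ℝ) - B1.rhat x = 0; rw [(hBg.supp1 x hx).2.2.1]; ring)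
        (fun x => by show (1:ℝ) - B0.rhat x ≤ 1; linarith [(hB0c x).2.2.1.1])
        (fun x => by show (1:ℝ) - B1.rhat x ≤ 1; linarith [(hB1c x).2.2.1.1])
        (by show (1:ℝ) - B0.rhat 0 = 1; rw [hBg.sub0.rhat_zero]; ring)
        (by show (1:ℝ) - B1.rhat 0 = 1; rw [hBg.sub1.rhat_zero]; ring) }
  have NPwh : NPair V0 V1 br (fun z => 1 - A.what z) (fun z => 1 - B.what z) :=
    { f0 := fun z => by show (0:ℝ) ≤ 1 - A.what z; linarith [(hAc z).2.2.2.1.2]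
      f1 := fun z => by show (1:ℝ) - A.what z ≤ 1; linarith [(hAc z).2.2.2.1.1]
      g0 := fun z => by show (0:ℝ) ≤ 1 - B.what z; linarith [(hBc z).2.2.2.1.2]
      g1 := fun z => by show (1:ℝ) - B.what z ≤ 1; linarith [(hBc z).2.2.2.1.1]
      fz := by show (1:ℝ) - A.what 0 = 1; rw [hAg.subA.what_zero]; ring
      gz := by show (1:ℝ) - B.what 0 = 1; rw [hBg.subA.what_zero]; ring
      fbr := fun x y => by
        show max (1 - A.what x) (1 - A.what y) ≤ 1 - A.what (br x y)
        rw [← one_sub_min]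
        linarith [hA.br_what x y]
      gbr := fun x y => by
        show max (1 - B.what x) (1 - B.what y) ≤ 1 - B.what (br x y)
        rw [← one_sub_min]
        linarith [hB.br_what x y]
      fproj := graded_proj hLS.compl (fun z => 1 - A.what z)
        (fun z => 1 - A0.what z) (fun z => 1 - A1.what z)
        (fun x => by
          have h1 : A.what x = infDecomp A0.what A1.what x := by rw [hAg.eq]; rfl
          have h2 := infDecomp_dual A0.what A1.what (fun z => (hA0c z).2.2.2.1.1) x
          show 1 - A.what x = _
          rw [h1, h2]
          ring)
        (fun x hx => by show (1:ℝ) - A0.what x = 0; rw [(hAg.supp0 x hx).2.2.2]; ring)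
        (fun x hx => by show (1:ℝ) - A1.what x = 0; rw [(hAg.supp1 x hx).2.2.2]; ring)
        (fun x => by show (1:ℝ) - A0.what x ≤ 1; linarith [(hA0c x).2.2.2.1.1])
        (fun x => by show (1:ℝ) - A1.what x ≤ 1; linarith [(hA1c x).2.2.2.1.1])
        (by show (1:ℝ) - A0.what 0 = 1; rw [hAg.sub0.what_zero]; ring)
        (by show (1:ℝ) - A1.what 0 = 1; rw [hAg.sub1.what_zero]; ring)
      gproj := graded_proj hLS.compl (fun z => 1 - B.what z)
        (fun z => 1 - B0.what z) (fun z => 1 - B1.what z)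
        (fun x => by
          have h1 : B.what x = infDecomp B0.what B1.what x := by rw [hBg.eq]; rfl
          have h2 := infDecomp_dual B0.what B1.what (fun z => (hB0c z).2.2.2.1.1) x
          show 1 - B.what x = _
          rw [h1, h2]
          ring)
        (fun x hx => by show (1:ℝ) - B0.what x = 0; rw [(hBg.supp0 x hx).2.2.2]; ring)
        (fun x hx => by show (1:ℝ) - B1.what x = 0; rw [(hBg.supp1 x hx).2.2.2]; ring)
        (fun x => by show (1:ℝ) - B0.what x ≤ 1; linarith [(hB0c x).2.2.2.1.1])
        (fun x => by show (1:ℝ) - B1.what x ≤ 1; linarith [(hB1c x).2.2.2.1.1])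
        (by show (1:ℝ) - B0.what 0 = 1; rw [hBg.sub0.what_zero]; ring)
        (by show (1:ℝ) - B1.what 0 = 1; rw [hBg.sub1.what_zero]; ring) }
  have hCrh : ∀ x, (CIFSet.bracket K br A B).rhat x
      = 1 - Fb K br (fun z => 1 - A.rhat z) (fun z => 1 - B.rhat z) x :=
    fun x => bracket_rhat_eq A.rhat B.rhat (fun z => (hAc z).2.2.1.1) x
  have hCwh : ∀ x, (CIFSet.bracket K br A B).what x
      = 1 - Fb K br (fun z => 1 - A.what z) (fun z => 1 - B.what z) x :=
    fun x => bracket_rhat_eq A.what B.what (fun z => (hAc z).2.2.2.1.1) x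
  have Grh0 : ∀ y, 0 ≤ Fb K br (fun z => 1 - A.rhat z) (fun z => 1 - B.rhat z) y :=
    fun y => Fb_nonneg NPrh.f1 y
  have Grh1 : ∀ y, Fb K br (fun z => 1 - A.rhat z) (fun z => 1 - B.rhat z) y ≤ 1 :=
    fun y => Fb_le_one NPrh.f1 y
  have Gwh0 : ∀ y, 0 ≤ Fb K br (fun z => 1 - A.what z) (fun z => 1 - B.what z) y :=
    fun y => Fb_nonneg NPwh.f1 y
  have Gwh1 : ∀ y, Fb K br (fun z => 1 - A.what z) (fun z => 1 - B.what z) y ≤ 1 :=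
    fun y => Fb_le_one NPwh.f1 y
  have subC : CIFSet.IsSubspace K (CIFSet.bracket K br A B) := by
    refine ⟨?_, ?_, ?_, ?_, ?_, ?_, ?_, ?_, ?_, ?_, ?_, ?_, ?_⟩
    · intro x
      refine ⟨⟨Fb_nonneg NPr.f1 x, Fb_le_one NPr.f1 x⟩,
        ⟨Fb_nonneg NPw.f1 x, Fb_le_one NPw.f1 x⟩, ?_, ?_, ?_⟩
      · rw [hCrh x]
        exact ⟨by linarith [Grh1 x], by linarith [Grh0 x]⟩
      · rw [hCwh x]
        exact ⟨by linarith [Gwh1 x], by linarith [Gwh0 x]⟩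
      · rw [hCrh x]
        have hm : Fb K br A.r B.r x
            ≤ Fb K br (fun z => 1 - A.rhat z) (fun z => 1 - B.rhat z) x :=
          Fb_mono (fun z => by show A.r z ≤ 1 - A.rhat z; linarith [(hAc z).2.2.2.2])
            (fun z => by show B.r z ≤ 1 - B.rhat z; linarith [(hBc z).2.2.2.2])
            NPrh.f1 x
        show Fb K br A.r B.r x
          + (1 - Fb K br (fun z => 1 - A.rhat z) (fun z => 1 - B.rhat z) x) ≤ 1
        linarith
    · exact fun x y => Fb_add NPr x y
    · exact fun x y => Fb_add NPw x y
    · intro x y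
      rw [hCrh x, hCrh y, hCrh (x + y), ← one_sub_min]
      linarith [Fb_add NPrh x y]
    · intro x y
      rw [hCwh x, hCwh y, hCwh (x + y), ← one_sub_min]
      linarith [Fb_add NPwh x y]
    · exact fun c x => Fb_smul NPr c x
    · exact fun c x => Fb_smul NPw c x
    · intro c x
      rw [hCrh (c • x), hCrh x]
      linarith [Fb_smul NPrh c x]
    · intro c x
      rw [hCwh (c • x), hCwh x]
      linarith [Fb_smul NPwh c x]
    · exact Fb_zero NPr
    · exact Fb_zero NPw
    · rw [hCrh 0, Fb_zero NPrh]
      ring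
    · rw [hCwh 0, Fb_zero NPwh]
      ring
  refine ⟨⟨⟨fun x => if x ∈ V0 then (CIFSet.bracket K br A B).r x else 0,
      fun x => if x ∈ V0 then (CIFSet.bracket K br A B).w x else 0,
      fun x => if x ∈ V0 then (CIFSet.bracket K br A B).rhat x else 1,
      fun x => if x ∈ V0 then (CIFSet.bracket K br A B).what x else 1⟩,
    ⟨fun x => if x ∈ V1 then (CIFSet.bracket K br A B).r x else 0,
      fun x => if x ∈ V1 then (CIFSet.bracket K br A B).w x else 0,
      fun x => if x ∈ V1 then (CIFSet.bracket K br A B).rhat x else 1,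
      fun x => if x ∈ V1 then (CIFSet.bracket K br A B).what x else 1⟩,
    subC, restrict_subspace V0 _ subC, restrict_subspace V1 _ subC,
    fun x hx => ⟨if_neg hx, if_neg hx, if_neg hx, if_neg hx⟩,
    fun x hx => ⟨if_neg hx, if_neg hx, if_neg hx, if_neg hx⟩, ?_⟩,
    fun x y => Fb_br hLS NPr x y, fun x y => Fb_br hLS NPw x y, ?_, ?_⟩
  · -- C = C0.sum C1
    refine CIFSet.ext'_s11 ?_ ?_ ?_ ?_
    · funext x
      exact (restrict_supDecomp V0 V1 hLS.compl (CIFSet.bracket K br A B).r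
        (fun z => Fb_nonneg NPr.f1 z) (fun z => Fb_le_one NPr.f1 z)
        (fun a b => Fb_add NPr a b) (fun u v hu hv => Fb_proj hLS NPr u v hu hv) x).symm
    · funext x
      exact (restrict_supDecomp V0 V1 hLS.compl (CIFSet.bracket K br A B).w
        (fun z => Fb_nonneg NPw.f1 z) (fun z => Fb_le_one NPw.f1 z)
        (fun a b => Fb_add NPw a b) (fun u v hu hv => Fb_proj hLS NPw u v hu hv) x).symm
    · funext x
      show (CIFSet.bracket K br A B).rhat x = infDecomp _ _ x
      rw [infDecomp_dual _ _ (fun z => by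
        dsimp only
        split_ifs
        · exact ((subC.isCIF z).2.2.1).1
        · norm_num)]
      have hfe0 : (fun z => 1 - (if z ∈ V0 then (CIFSet.bracket K br A B).rhat z else 1))
          = fun z => if z ∈ V0 then 1 - (CIFSet.bracket K br A B).rhat z else 0 :=
        funext fun z => by by_cases h : z ∈ V0 <;> simp [h]
      have hfe1 : (fun z => 1 - (if z ∈ V1 then (CIFSet.bracket K br A B).rhat z else 1))
          = fun z => if z ∈ V1 then 1 - (CIFSet.bracket K br A B).rhat z else 0 :=
        funext fun z => by by_cases h : z ∈ V1 <;> simp [h]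
      rw [hfe0, hfe1, restrict_supDecomp V0 V1 hLS.compl
        (fun z => 1 - (CIFSet.bracket K br A B).rhat z)
        (fun z => by show (0:ℝ) ≤ 1 - _; linarith [((subC.isCIF z).2.2.1).2])
        (fun z => by show (1:ℝ) - _ ≤ 1; linarith [((subC.isCIF z).2.2.1).1])
        (fun a b => by
          show min (1 - (CIFSet.bracket K br A B).rhat a)
            (1 - (CIFSet.bracket K br A B).rhat b)
            ≤ 1 - (CIFSet.bracket K br A B).rhat (a + b)
          rw [← one_sub_max]
          linarith [subC.add_rhat a b])
        (fun u v hu hv => by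
          show 1 - (CIFSet.bracket K br A B).rhat (u + v)
            ≤ min (1 - (CIFSet.bracket K br A B).rhat u)
              (1 - (CIFSet.bracket K br A B).rhat v)
          rw [hCrh u, hCrh v, hCrh (u + v)]
          have h := Fb_proj hLS NPrh u v hu hv
          simp only [sub_sub_cancel]
          exact h) x]
      ring
    · funext x
      show (CIFSet.bracket K br A B).what x = infDecomp _ _ x
      rw [infDecomp_dual _ _ (fun z => by
        dsimp only
        split_ifs
        · exact ((subC.isCIF z).2.2.2.1).1
        · norm_num)]
      have hfe0 : (fun z => 1 - (if z ∈ V0 then (CIFSet.bracket K br A B).what z else 1))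
          = fun z => if z ∈ V0 then 1 - (CIFSet.bracket K br A B).what z else 0 :=
        funext fun z => by by_cases h : z ∈ V0 <;> simp [h]
      have hfe1 : (fun z => 1 - (if z ∈ V1 then (CIFSet.bracket K br A B).what z else 1))
          = fun z => if z ∈ V1 then 1 - (CIFSet.bracket K br A B).what z else 0 :=
        funext fun z => by by_cases h : z ∈ V1 <;> simp [h]
      rw [hfe0, hfe1, restrict_supDecomp V0 V1 hLS.compl
        (fun z => 1 - (CIFSet.bracket K br A B).what z)
        (fun z => by show (0:ℝ) ≤ 1 - _; linarith [((subC.isCIF z).2.2.2.1).2])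
        (fun z => by show (1:ℝ) - _ ≤ 1; linarith [((subC.isCIF z).2.2.2.1).1])
        (fun a b => by
          show min (1 - (CIFSet.bracket K br A B).what a)
            (1 - (CIFSet.bracket K br A B).what b)
            ≤ 1 - (CIFSet.bracket K br A B).what (a + b)
          rw [← one_sub_max]
          linarith [subC.add_what a b])
        (fun u v hu hv => by
          show 1 - (CIFSet.bracket K br A B).what (u + v)
            ≤ min (1 - (CIFSet.bracket K br A B).what u)
              (1 - (CIFSet.bracket K br A B).what v)
          rw [hCwh u, hCwh v, hCwh (u + v)]
          have h := Fb_proj hLS NPwh u v hu hv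
          simp only [sub_sub_cancel]
          exact h) x]
      ring
  · intro x y
    rw [hCrh x, hCrh y, hCrh (br x y), ← one_sub_max]
    linarith [Fb_br hLS NPrh x y]
  · intro x y
    rw [hCwh x, hCwh y, hCwh (br x y), ← one_sub_max]
    linarith [Fb_br hLS NPwh x y]


end CIF
end

section
/- Let φ : V → V' be a surjective anti-homomorphism of Lie superalgebras and let A, B be CIF ideals of V. Then φ([A, B]) ⊆ [φ(A), φ(B)] as CIF sets on V'. -/
namespace CIF

section Aux

variable {K : Type*} [Field K] {V V' : Type*} [AddCommGroup V] [Module K V]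
    [AddCommGroup V'] [Module K V']

private lemma map_rep_sum (f : V → V') (hadd : ∀ x y, f (x + y) = f x + f y)
    (hsmul : ∀ (c : K) (x : V), f (c • x) = c • f x)
    {br : V → V → V} {br' : V' → V' → V'}
    (hbr : ∀ x y, f (br x y) = -br' (f x) (f y))
    {n : ℕ} (c : Fin (n + 1) → K) (a b : Fin (n + 1) → V) :
    f (∑ i, c i • br (a i) (b i)) = ∑ i, (-(c i)) • br' (f (a i)) (f (b i)) := by
  have : f (∑ i, c i • br (a i) (b i))
      = ∑ i, f (c i • br (a i) (b i)) :=
    map_sum (AddMonoidHom.mk' f hadd) _ _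
  rw [this]
  refine Finset.sum_congr rfl fun i _ => ?_
  rw [hsmul, hbr, neg_smul, smul_neg]

private lemma sup_side (br : V → V → V) (br' : V' → V' → V') (f : V → V')
    (hadd : ∀ x y, f (x + y) = f x + f y)
    (hsmul : ∀ (c : K) (x : V), f (c • x) = c • f x)
    (hbr : ∀ x y, f (br x y) = -br' (f x) (f y))
    (hsurj : Function.Surjective f)
    (gA gB : V → ℝ) (hA1 : ∀ x, gA x ≤ 1) (hB1 : ∀ x, gB x ≤ 1) (y : V') :
    sSup {t | ∃ x, f x = y ∧ t = sSup (insert 0 (bracketRepMin K br gA gB x))}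
      ≤ sSup (insert 0 (bracketRepMin K br'
          (fun y' => sSup {t | ∃ x, f x = y' ∧ t = gA x})
          (fun y' => sSup {t | ∃ x, f x = y' ∧ t = gB x}) y)) := by
  set FA : V' → ℝ := fun y' => sSup {t | ∃ x, f x = y' ∧ t = gA x} with hFAdef
  set FB : V' → ℝ := fun y' => sSup {t | ∃ x, f x = y' ∧ t = gB x} with hFBdef
  have hFA1 : ∀ y', FA y' ≤ 1 := by
    intro y'
    obtain ⟨x, hx⟩ := hsurj y'
    refine csSup_le ⟨gA x, x, hx, rfl⟩ ?_
    rintro t ⟨x', _, rfl⟩; exact hA1 x'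
  have hFB1 : ∀ y', FB y' ≤ 1 := by
    intro y'
    obtain ⟨x, hx⟩ := hsurj y'
    refine csSup_le ⟨gB x, x, hx, rfl⟩ ?_
    rintro t ⟨x', _, rfl⟩; exact hB1 x'
  have hFAle : ∀ x, gA x ≤ FA (f x) := fun x =>
    le_csSup ⟨1, by rintro t ⟨x', _, rfl⟩; exact hA1 x'⟩ ⟨x, rfl, rfl⟩
  have hFBle : ∀ x, gB x ≤ FB (f x) := fun x =>
    le_csSup ⟨1, by rintro t ⟨x', _, rfl⟩; exact hB1 x'⟩ ⟨x, rfl, rfl⟩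
  have hbdd : BddAbove (insert 0 (bracketRepMin K br' FA FB y)) := by
    refine ⟨1, ?_⟩
    rintro t (rfl | ⟨n, c, a, b, hrep, rfl⟩)
    · norm_num
    · exact le_trans (Finset.inf'_le _ (Finset.mem_univ 0))
        (le_trans (min_le_left _ _) (hFA1 _))
  obtain ⟨x0, hx0⟩ := hsurj y
  refine csSup_le ⟨_, x0, hx0, rfl⟩ ?_
  rintro t ⟨x, hfx, rfl⟩
  refine csSup_le (Set.insert_nonempty _ _) ?_
  rintro t (rfl | ⟨n, c, a, b, hrep, rfl⟩)
  · exact le_csSup hbdd (Set.mem_insert _ _)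
  · have hy : y = ∑ i, (-(c i)) • br' (f (a i)) (f (b i)) := by
      rw [← hfx, hrep]; exact map_rep_sum f hadd hsmul hbr c a b
    have hmem : (Finset.univ.inf' Finset.univ_nonempty
          fun i => min (FA (f (a i))) (FB (f (b i))))
        ∈ bracketRepMin K br' FA FB y :=
      ⟨n, fun i => -(c i), fun i => f (a i), fun i => f (b i), hy, rfl⟩
    refine le_trans ?_ (le_csSup hbdd (Set.mem_insert_of_mem _ hmem))
    refine Finset.le_inf' _ _ fun i _ => ?_
    exact le_trans (Finset.inf'_le _ (Finset.mem_univ i))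
      (min_le_min (hFAle _) (hFBle _))

private lemma inf_side (br : V → V → V) (br' : V' → V' → V') (f : V → V')
    (hadd : ∀ x y, f (x + y) = f x + f y)
    (hsmul : ∀ (c : K) (x : V), f (c • x) = c • f x)
    (hbr : ∀ x y, f (br x y) = -br' (f x) (f y))
    (hsurj : Function.Surjective f)
    (gA gB : V → ℝ) (hA0 : ∀ x, 0 ≤ gA x) (hB0 : ∀ x, 0 ≤ gB x) (y : V') :
    sInf (insert 1 (bracketRepMax K br'
          (fun y' => sInf {t | ∃ x, f x = y' ∧ t = gA x})
          (fun y' => sInf {t | ∃ x, f x = y' ∧ t = gB x}) y))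
      ≤ sInf {t | ∃ x, f x = y ∧ t = sInf (insert 1 (bracketRepMax K br gA gB x))} := by
  set FA : V' → ℝ := fun y' => sInf {t | ∃ x, f x = y' ∧ t = gA x} with hFAdef
  set FB : V' → ℝ := fun y' => sInf {t | ∃ x, f x = y' ∧ t = gB x} with hFBdef
  have hFA0 : ∀ y', 0 ≤ FA y' := by
    intro y'
    obtain ⟨x, hx⟩ := hsurj y'
    refine le_csInf ⟨gA x, x, hx, rfl⟩ ?_
    rintro t ⟨x', _, rfl⟩; exact hA0 x'
  have hFB0 : ∀ y', 0 ≤ FB y' := by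
    intro y'
    obtain ⟨x, hx⟩ := hsurj y'
    refine le_csInf ⟨gB x, x, hx, rfl⟩ ?_
    rintro t ⟨x', _, rfl⟩; exact hB0 x'
  have hFAle : ∀ x, FA (f x) ≤ gA x := fun x =>
    csInf_le ⟨0, by rintro t ⟨x', _, rfl⟩; exact hA0 x'⟩ ⟨x, rfl, rfl⟩
  have hFBle : ∀ x, FB (f x) ≤ gB x := fun x =>
    csInf_le ⟨0, by rintro t ⟨x', _, rfl⟩; exact hB0 x'⟩ ⟨x, rfl, rfl⟩
  have hbdd : BddBelow (insert 1 (bracketRepMax K br' FA FB y)) := by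
    refine ⟨0, ?_⟩
    rintro t (rfl | ⟨n, c, a, b, hrep, rfl⟩)
    · norm_num
    · exact le_trans (hFA0 (a 0)) (le_trans (le_max_left _ _)
        (Finset.le_sup' (fun i => max (FA (a i)) (FB (b i))) (Finset.mem_univ 0)))
  obtain ⟨x0, hx0⟩ := hsurj y
  refine le_csInf ⟨_, x0, hx0, rfl⟩ ?_
  rintro t ⟨x, hfx, rfl⟩
  refine le_csInf (Set.insert_nonempty _ _) ?_
  rintro t (rfl | ⟨n, c, a, b, hrep, rfl⟩)
  · exact csInf_le hbdd (Set.mem_insert _ _)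
  · have hy : y = ∑ i, (-(c i)) • br' (f (a i)) (f (b i)) := by
      rw [← hfx, hrep]; exact map_rep_sum f hadd hsmul hbr c a b
    have hmem : (Finset.univ.sup' Finset.univ_nonempty
          fun i => max (FA (f (a i))) (FB (f (b i))))
        ∈ bracketRepMax K br' FA FB y :=
      ⟨n, fun i => -(c i), fun i => f (a i), fun i => f (b i), hy, rfl⟩
    refine le_trans (csInf_le hbdd (Set.mem_insert_of_mem _ hmem)) ?_
    refine Finset.sup'_le _ _ fun i _ => ?_
    exact le_trans (max_le_max (hFAle _) (hFBle _))
      (Finset.le_sup' (fun i => max (gA (a i)) (gB (b i))) (Finset.mem_univ i))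

end Aux

theorem image_bracket_subset {K : Type*} [Field K] {V V' : Type*} [AddCommGroup V] [Module K V]
    [AddCommGroup V'] [Module K V']
    (V0 V1 : Submodule K V) (W0 W1 : Submodule K V')
    (br : V → V → V) (br' : V' → V' → V')
    (hLS : IsLieSuper K V0 V1 br) (hLS' : IsLieSuper K W0 W1 br')
    (f : V → V') (hf : IsAntiHom K V0 V1 W0 W1 br br' f)
    (hsurj : Function.Surjective f)
    (A B : CIFSet V) (hA : IsIdeal K V0 V1 br A) (hB : IsIdeal K V0 V1 br B) :
    (CIFSet.image f (CIFSet.bracket K br A B)).Subset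
      (CIFSet.bracket K br' (CIFSet.image f A) (CIFSet.image f B)) := by
  obtain ⟨A0, A1, hGA⟩ := hA.graded
  obtain ⟨B0, B1, hGB⟩ := hB.graded
  have hAcif := hGA.subA.isCIF
  have hBcif := hGB.subA.isCIF
  intro y
  simp only [CIFSet.Subset, CIFSet.image, CIFSet.bracket, hsurj.range_eq, Set.mem_univ,
    if_true]
  refine ⟨?_, ?_, ?_, ?_⟩
  · exact sup_side br br' f hf.map_add hf.map_smul hf.map_br hsurj A.r B.r
      (fun x => (hAcif x).1.2) (fun x => (hBcif x).1.2) y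
  · exact sup_side br br' f hf.map_add hf.map_smul hf.map_br hsurj A.w B.w
      (fun x => (hAcif x).2.1.2) (fun x => (hBcif x).2.1.2) y
  · exact inf_side br br' f hf.map_add hf.map_smul hf.map_br hsurj A.rhat B.rhat
      (fun x => (hAcif x).2.2.1.1) (fun x => (hBcif x).2.2.1.1) y
  · exact inf_side br br' f hf.map_add hf.map_smul hf.map_br hsurj A.what B.what
      (fun x => (hAcif x).2.2.2.1.1) (fun x => (hBcif x).2.2.2.1.1) y

end CIF
end

section
/- Let φ : V → V' be a surjective anti-homomorphism of Lie superalgebras and let A, B be CIF ideals of V'. Then φ⁻¹(A + B) = φ⁻¹(A) + φ⁻¹(B) as CIF sets on V. -/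
namespace CIF

theorem preimage_sum {K : Type*} [Field K] {V V' : Type*} [AddCommGroup V] [Module K V]
    [AddCommGroup V'] [Module K V']
    (V0 V1 : Submodule K V) (W0 W1 : Submodule K V')
    (br : V → V → V) (br' : V' → V' → V')
    (hLS : IsLieSuper K V0 V1 br) (hLS' : IsLieSuper K W0 W1 br')
    (f : V → V') (hf : IsAntiHom K V0 V1 W0 W1 br br' f)
    (hsurj : Function.Surjective f)
    (A B : CIFSet V') (hA : IsIdeal K W0 W1 br' A) (hB : IsIdeal K W0 W1 br' B) :
    CIFSet.preimage f (A.sum B)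
      = (CIFSet.preimage f A).sum (CIFSet.preimage f B) := by
  have keymin : ∀ (g h : V' → ℝ) (x : V),
      {t | ∃ a b : V', f x = a + b ∧ t = min (g a) (h b)} =
      {t | ∃ a b : V, x = a + b ∧ t = min (g (f a)) (h (f b))} := by
    intro g h x
    ext t
    constructor
    · rintro ⟨a', b', hx, rfl⟩
      obtain ⟨a, rfl⟩ := hsurj a'
      refine ⟨a, x - a, by abel, ?_⟩
      have h1 : f (a + (x - a)) = f a + f (x - a) := hf.map_add a (x - a)
      rw [add_sub_cancel] at h1
      rw [h1] at hx
      rw [add_left_cancel hx]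
    · rintro ⟨a, b, rfl, rfl⟩
      exact ⟨f a, f b, hf.map_add a b, rfl⟩
  have keymax : ∀ (g h : V' → ℝ) (x : V),
      {t | ∃ a b : V', f x = a + b ∧ t = max (g a) (h b)} =
      {t | ∃ a b : V, x = a + b ∧ t = max (g (f a)) (h (f b))} := by
    intro g h x
    ext t
    constructor
    · rintro ⟨a', b', hx, rfl⟩
      obtain ⟨a, rfl⟩ := hsurj a'
      refine ⟨a, x - a, by abel, ?_⟩
      have h1 : f (a + (x - a)) = f a + f (x - a) := hf.map_add a (x - a)
      rw [add_sub_cancel] at h1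
      rw [h1] at hx
      rw [add_left_cancel hx]
    · rintro ⟨a, b, rfl, rfl⟩
      exact ⟨f a, f b, hf.map_add a b, rfl⟩
  show CIFSet.mk _ _ _ _ = CIFSet.mk _ _ _ _
  congr 1 <;> funext x <;>
    simp only [CIFSet.preimage, CIFSet.sum, supDecomp, infDecomp]
  · rw [keymin]
  · rw [keymin]
  · rw [keymax]
  · rw [keymax]

end CIF
end
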